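/- arXiv:math/0402359 — 8 statements merged into one kernel-verified Lean document; each statement's English description precedes it below -/
import Mathlib

section
/- Let 0 → U →f W →g V → 0 be a short exact sequence of finite-dimensional modules over a finite-dimensional algebra A over a field k. Then this sequence splits if and only if dim_k Hom_A(U ⊕ V, U) = dim_k Hom_A(W, U). -/
/-!
`Hom_A(-, U)` is left exact, so `0 → Hom(V, U) → Hom(W, U) → Hom(U, U)` (precomposition with
`g`, then with `f`) is exact and `dim Hom(W, U) = dim Hom(V, U) + dim (image of - ∘ f)`. Since
`dim Hom(U × V, U) = dim Hom(U, U) + dim Hom(V, U)`, the dimensions agree iff `- ∘ f` is onto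
`Hom(U, U)`, i.e. iff `id_U` factors through `f`, which is the splitting.
-/

open Module LinearMap

instance FiniteDimensional.linearMap_of_isScalarTower {k A M N : Type*} [Field k] [Ring A]
    [Algebra k A] [AddCommGroup M] [Module A M] [Module k M] [IsScalarTower k A M]
    [AddCommGroup N] [Module A N] [Module k N] [IsScalarTower k A N] [SMulCommClass A k N]
    [FiniteDimensional k M] [FiniteDimensional k N] :
    FiniteDimensional k (M →ₗ[A] N) :=
  .of_injective (restrictScalarsₗ k A M N k) (restrictScalars_injective k)

-- `LinearMap.exact_lcomp_of_exact_of_surjective` needs a commutative ring; `A` is not one.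
theorem Function.Exact.lcomp_of_surjective {R S M₁ M₂ M₃ N : Type*} [Ring R] [Semiring S]
    [AddCommGroup M₁] [AddCommGroup M₂] [AddCommGroup M₃] [AddCommGroup N]
    [Module R M₁] [Module R M₂] [Module R M₃] [Module R N] [Module S N] [SMulCommClass R S N]
    {f : M₁ →ₗ[R] M₂} {g : M₂ →ₗ[R] M₃} (hfg : Function.Exact f g)
    (hg : Function.Surjective g) :
    Function.Exact (lcomp S N g) (lcomp S N f) := by
  intro h
  simp only [lcomp_apply', Set.mem_range]
  constructor
  · intro hh
    refine ⟨(range f).liftQ h (range_le_ker_iff.mpr hh) ∘ₗ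
      (hfg.linearEquivOfSurjective hg).symm.toLinearMap, ?_⟩
    ext x
    simp
  · rintro ⟨h', rfl⟩
    rw [LinearMap.comp_assoc, hfg.linearMap_comp_eq_zero, comp_zero]

theorem exists_leftInverse_iff_surjective_lcomp {R U W : Type*} (S : Type*) [Semiring R]
    [Semiring S] [AddCommMonoid U] [AddCommMonoid W] [Module R U] [Module R W] [Module S U]
    [SMulCommClass R S U] (f : U →ₗ[R] W) :
    (∃ r : W →ₗ[R] U, r ∘ₗ f = LinearMap.id) ↔ Function.Surjective (lcomp S U f) := by
  refine ⟨fun ⟨r, hr⟩ h ↦ ⟨h ∘ₗ r, ?_⟩, fun hs ↦ hs LinearMap.id⟩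
  rw [lcomp_apply', LinearMap.comp_assoc, hr, comp_id]

theorem Function.Exact.finrank_eq_add_finrank_range {K P Q R : Type*} [DivisionRing K]
    [AddCommGroup P] [AddCommGroup Q] [AddCommGroup R] [Module K P] [Module K Q] [Module K R]
    [FiniteDimensional K Q] {ψ : P →ₗ[K] Q} {φ : Q →ₗ[K] R} (h : Function.Exact ψ φ)
    (hψ : Function.Injective ψ) :
    finrank K Q = finrank K P + finrank K (range φ) := by
  rw [← φ.finrank_range_add_finrank_ker, h.linearMap_ker_eq,
    (LinearEquiv.ofInjective ψ hψ).finrank_eq, add_comm]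

theorem stmt_1_general (k A : Type*) [Field k] [Ring A] [Algebra k A]
    (U W V : Type*)
    [AddCommGroup U] [Module A U] [Module k U] [IsScalarTower k A U] [SMulCommClass A k U]
    [AddCommGroup W] [Module A W] [Module k W] [IsScalarTower k A W]
    [AddCommGroup V] [Module A V] [Module k V] [IsScalarTower k A V]
    [FiniteDimensional k U] [FiniteDimensional k W] [FiniteDimensional k V]
    (f : U →ₗ[A] W) (g : W →ₗ[A] V)
    (hg : Function.Surjective g)
    (hfg : Function.Exact f g) :
    (∃ r : W →ₗ[A] U, r ∘ₗ f = LinearMap.id) ↔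
      finrank k ((U × V) →ₗ[A] U) = finrank k (W →ₗ[A] U) := by
  have hW : finrank k (W →ₗ[A] U) =
      finrank k (V →ₗ[A] U) + finrank k (range (lcomp k U f)) :=
    (hfg.lcomp_of_surjective hg).finrank_eq_add_finrank_range
      (lcomp_injective_of_surjective g hg)
  have hUV : finrank k ((U × V) →ₗ[A] U) = finrank k (U →ₗ[A] U) + finrank k (V →ₗ[A] U) := by
    rw [← (coprodEquiv k).finrank_eq, finrank_prod]
  rw [exists_leftInverse_iff_surjective_lcomp k, ← range_eq_top, hW, hUV, add_comm,
    Nat.add_left_cancel_iff]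
  exact ⟨fun h ↦ h ▸ (finrank_top k _).symm, fun h ↦ Submodule.eq_top_of_finrank_eq h.symm⟩

theorem stmt_1 (k A : Type*) [Field k] [Ring A] [Algebra k A] [FiniteDimensional k A]
    (U W V : Type*)
    [AddCommGroup U] [Module A U] [Module k U] [IsScalarTower k A U] [SMulCommClass A k U]
    [AddCommGroup W] [Module A W] [Module k W] [IsScalarTower k A W] [SMulCommClass A k W]
    [AddCommGroup V] [Module A V] [Module k V] [IsScalarTower k A V] [SMulCommClass A k V]
    [FiniteDimensional k U] [FiniteDimensional k W] [FiniteDimensional k V]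
    (f : U →ₗ[A] W) (g : W →ₗ[A] V)
    (hf : Function.Injective f) (hg : Function.Surjective g)
    (hfg : Function.Exact f g) :
    (∃ r : W →ₗ[A] U, r ∘ₗ f = LinearMap.id) ↔
      finrank k ((U × V) →ₗ[A] U) = finrank k (W →ₗ[A] U) :=
  stmt_1_general k A U W V f g hg hfg
end

section
/- Let 0 → U →f W →g V → 0 be a short exact sequence of finite-dimensional modules over a finite-dimensional algebra A over a field k. Then this sequence splits if and only if dim_k Hom_A(V, U ⊕ V) = dim_k Hom_A(V, W). -/
/-!
Post-composition turns `0 → U → W → V → 0` into the left exact sequence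
`0 → Hom_A(V, U) → Hom_A(V, W) → Hom_A(V, V)` of `k`-vector spaces, so
`dim Hom_A(V, W) = dim Hom_A(V, U) + dim (range of g ∘ -)`, while
`dim Hom_A(V, U ⊕ V) = dim Hom_A(V, U) + dim Hom_A(V, V)`. Hence the dimensions agree iff
`g ∘ -` is onto `Hom_A(V, V)`, i.e. iff `id_V` lifts through `g`, i.e. iff the sequence splits.
-/

open Module

namespace LinearMap

section CommSemiring

variable {k A : Type*} [CommSemiring k] [Ring A] [Algebra k A]
  {X U W V : Type*} [AddCommGroup X] [Module A X]
  [AddCommGroup U] [Module A U] [Module k U] [IsScalarTower k A U] [SMulCommClass A k U]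
  [AddCommGroup W] [Module A W] [Module k W] [IsScalarTower k A W] [SMulCommClass A k W]
  [AddCommGroup V] [Module A V] [Module k V] [IsScalarTower k A V] [SMulCommClass A k V]

theorem compRight_injective {f : U →ₗ[A] W} (hf : Function.Injective f) :
    Function.Injective (compRight k f : (X →ₗ[A] U) →ₗ[k] X →ₗ[A] W) :=
  fun _ _ h ↦ ext fun x ↦ hf (LinearMap.congr_fun h x)

theorem _root_.Function.Exact.compRight {f : U →ₗ[A] W} {g : W →ₗ[A] V}
    (hfg : Function.Exact f g) (hf : Function.Injective f) :
    Function.Exact (compRight k f : (X →ₗ[A] U) →ₗ[k] X →ₗ[A] W) (compRight k g) := by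
  intro h
  simp only [compRight_apply, Set.mem_range]
  constructor
  · intro hgh
    have hmem (x : X) : h x ∈ range f := (hfg (h x)).mp (LinearMap.congr_fun hgh x)
    refine ⟨(LinearEquiv.ofInjective f hf).symm.toLinearMap ∘ₗ h.codRestrict (range f) hmem, ?_⟩
    ext x
    exact congrArg Subtype.val ((LinearEquiv.ofInjective f hf).apply_symm_apply ⟨h x, hmem x⟩)
  · rintro ⟨h, rfl⟩
    rw [← comp_assoc, hfg.linearMap_comp_eq_zero, zero_comp]

theorem range_compRight_eq_top_iff (g : W →ₗ[A] V) :
    range (compRight k g : (V →ₗ[A] W) →ₗ[k] V →ₗ[A] V) = ⊤ ↔ ∃ s, g ∘ₗ s = id := by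
  rw [range_eq_top]
  refine ⟨fun hg ↦ hg id, fun ⟨s, hs⟩ φ ↦ ⟨s ∘ₗ φ, ?_⟩⟩
  rw [compRight_apply, ← comp_assoc, hs, id_comp]

end CommSemiring

section Field

variable {k A : Type*} [Field k] [Ring A] [Algebra k A]
  {X Y : Type*} [AddCommGroup X] [Module A X] [Module k X] [IsScalarTower k A X]
  [AddCommGroup Y] [Module A Y] [Module k Y] [IsScalarTower k A Y] [SMulCommClass A k Y]

instance finiteDimensional_linearMap [FiniteDimensional k X] [FiniteDimensional k Y] :
    FiniteDimensional k (X →ₗ[A] Y) :=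
  .of_injective (restrictScalarsₗ k A X Y k) (restrictScalars_injective k)

variable {U W V : Type*}
  [AddCommGroup U] [Module A U] [Module k U] [IsScalarTower k A U] [SMulCommClass A k U]
  [AddCommGroup W] [Module A W] [Module k W] [IsScalarTower k A W] [SMulCommClass A k W]
  [AddCommGroup V] [Module A V] [Module k V] [IsScalarTower k A V] [SMulCommClass A k V]
  [FiniteDimensional k X] [FiniteDimensional k W]

theorem finrank_linearMap_eq_add_finrank_range_compRight {f : U →ₗ[A] W} {g : W →ₗ[A] V}
    (hfg : Function.Exact f g) (hf : Function.Injective f) :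
    finrank k (X →ₗ[A] W) =
      finrank k (X →ₗ[A] U) + finrank k (range (compRight k g : (X →ₗ[A] W) →ₗ[k] _)) := by
  have hker : finrank k (ker (compRight k g : (X →ₗ[A] W) →ₗ[k] _)) = finrank k (X →ₗ[A] U) := by
    rw [(hfg.compRight (k := k) (X := X) hf).linearMap_ker_eq]
    exact (LinearEquiv.ofInjective _ (compRight_injective hf)).finrank_eq.symm
  rw [← finrank_range_add_finrank_ker (compRight k g), hker, add_comm]

end Field

end LinearMap

open LinearMap in
theorem stmt_2_general (k A : Type*) [Field k] [Ring A] [Algebra k A]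
    (U W V : Type*)
    [AddCommGroup U] [Module A U] [Module k U] [IsScalarTower k A U] [SMulCommClass A k U]
    [AddCommGroup W] [Module A W] [Module k W] [IsScalarTower k A W] [SMulCommClass A k W]
    [AddCommGroup V] [Module A V] [Module k V] [IsScalarTower k A V] [SMulCommClass A k V]
    [FiniteDimensional k U] [FiniteDimensional k W] [FiniteDimensional k V]
    (f : U →ₗ[A] W) (g : W →ₗ[A] V)
    (hf : Function.Injective f) (hg : Function.Surjective g)
    (hfg : Function.Exact f g) :
    (∃ r : W →ₗ[A] U, r ∘ₗ f = LinearMap.id) ↔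
      finrank k (V →ₗ[A] (U × V)) = finrank k (V →ₗ[A] W) := by
  have hprod : finrank k (V →ₗ[A] (U × V)) = finrank k (V →ₗ[A] U) + finrank k (V →ₗ[A] V) := by
    rw [← (prodEquiv (S := k)).finrank_eq, finrank_prod]
  rw [hprod, finrank_linearMap_eq_add_finrank_range_compRight hfg hf, Nat.add_left_cancel_iff,
    eq_comm, ← Submodule.eq_top_iff_finrank_eq, range_compRight_eq_top_iff]
  exact (hfg.split_tfae hf hg).out 1 0

theorem stmt_2 (k A : Type*) [Field k] [Ring A] [Algebra k A] [FiniteDimensional k A]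
    (U W V : Type*)
    [AddCommGroup U] [Module A U] [Module k U] [IsScalarTower k A U] [SMulCommClass A k U]
    [AddCommGroup W] [Module A W] [Module k W] [IsScalarTower k A W] [SMulCommClass A k W]
    [AddCommGroup V] [Module A V] [Module k V] [IsScalarTower k A V] [SMulCommClass A k V]
    [FiniteDimensional k U] [FiniteDimensional k W] [FiniteDimensional k V]
    (f : U →ₗ[A] W) (g : W →ₗ[A] V)
    (hf : Function.Injective f) (hg : Function.Surjective g)
    (hfg : Function.Exact f g) :
    (∃ r : W →ₗ[A] U, r ∘ₗ f = LinearMap.id) ↔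
      finrank k (V →ₗ[A] (U × V)) = finrank k (V →ₗ[A] W) :=
  stmt_2_general k A U W V f g hf hg hfg
end

section
/- Let 0 → U →f W →g V → 0 be a short exact sequence of finite-dimensional modules over a finite-dimensional k-algebra A. If W is isomorphic to U ⊕ V as an A-module, then the sequence splits. -/
/-!
Applying `Hom_A(-, U)` to `0 → U → W → V → 0` gives an exact sequence of finite-dimensional
`k`-vector spaces `0 → Hom_A(V, U) → Hom_A(W, U) → Hom_A(U, U)`. As `W ≅ U ⊕ V`, the middle term
has dimension `dim Hom_A(U, U) + dim Hom_A(V, U)`, so by rank–nullity restriction along `f` is onto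
`Hom_A(U, U)`, and any preimage of `1_U` is a retraction of `f`.
-/

open Module

namespace LinearMap

section Exact

variable {k A U W V : Type*} (X : Type*) [Semiring k] [Ring A]
  [AddCommGroup U] [Module A U] [AddCommGroup W] [Module A W] [AddCommGroup V] [Module A V]
  [AddCommGroup X] [Module A X] [Module k X] [SMulCommClass A k X]
  {f : U →ₗ[A] W} {g : W →ₗ[A] V}

theorem _root_.Function.Exact.lcomp_of_surjective_s3
    (hfg : Function.Exact f g) (hg : Function.Surjective g) :
    Function.Exact (lcomp k X g) (lcomp k X f) := by
  intro h
  refine ⟨fun hh ↦ ?_, ?_⟩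
  · have hle : range f ≤ ker h := range_le_ker_iff.mpr hh
    refine ⟨(range f).liftQ h hle ∘ₗ (hfg.linearEquivOfSurjective hg).symm.toLinearMap, ?_⟩
    ext w
    simp
  · rintro ⟨h', rfl⟩
    rw [lcomp_apply', lcomp_apply', comp_assoc, hfg.linearMap_comp_eq_zero, comp_zero]

end Exact

section FiniteDimensional

variable {k A U W V X : Type*} [Field k] [Ring A] [Algebra k A]
  [AddCommGroup U] [Module A U] [AddCommGroup W] [Module A W] [AddCommGroup V] [Module A V]
  [AddCommGroup X] [Module A X] [Module k X] [IsScalarTower k A X] [SMulCommClass A k X]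
  [FiniteDimensional k X]

instance finiteDimensional_of_isScalarTower [Module k U] [IsScalarTower k A U]
    [FiniteDimensional k U] : FiniteDimensional k (U →ₗ[A] X) :=
  .of_injective (restrictScalarsₗ k A U X k) (restrictScalars_injective k)

theorem finrank_linearMap_eq_add_of_linearEquiv_prod
    [Module k U] [IsScalarTower k A U] [FiniteDimensional k U]
    [Module k V] [IsScalarTower k A V] [FiniteDimensional k V] (e : W ≃ₗ[A] U × V) :
    finrank k (W →ₗ[A] X) = finrank k (U →ₗ[A] X) + finrank k (V →ₗ[A] X) := by
  rw [(LinearEquiv.congrLeft X k e).finrank_eq, ← (coprodEquiv k).finrank_eq, finrank_prod]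

theorem surjective_lcomp_of_finrank_eq_add
    [Module k U] [IsScalarTower k A U] [FiniteDimensional k U]
    [Module k W] [IsScalarTower k A W] [FiniteDimensional k W]
    {f : U →ₗ[A] W} {g : W →ₗ[A] V} (hfg : Function.Exact f g) (hg : Function.Surjective g)
    (hdim : finrank k (W →ₗ[A] X) = finrank k (U →ₗ[A] X) + finrank k (V →ₗ[A] X)) :
    Function.Surjective (lcomp k X f) := by
  have hker : ker (lcomp k X f) = range (lcomp k X g) :=
    exact_iff.mp (hfg.lcomp_of_surjective_s3 X hg)
  have hrank := (lcomp k X f).finrank_range_add_finrank_ker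
  rw [hker, finrank_range_of_inj (lcomp_injective_of_surjective g hg), hdim] at hrank
  exact range_eq_top.mp (Submodule.eq_top_of_finrank_eq (by omega))

end FiniteDimensional

end LinearMap

theorem stmt_3_general (k A : Type*) [Field k] [Ring A] [Algebra k A]
    (U W V : Type*)
    [AddCommGroup U] [Module A U] [Module k U] [IsScalarTower k A U] [SMulCommClass A k U]
    [AddCommGroup W] [Module A W] [Module k W] [IsScalarTower k A W]
    [AddCommGroup V] [Module A V] [Module k V] [IsScalarTower k A V]
    [FiniteDimensional k U] [FiniteDimensional k W] [FiniteDimensional k V]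
    (f : U →ₗ[A] W) (g : W →ₗ[A] V)
    (hg : Function.Surjective g)
    (hfg : Function.Exact f g)
    (e : Nonempty (W ≃ₗ[A] (U × V))) :
    ∃ r : W →ₗ[A] U, r ∘ₗ f = LinearMap.id := by
  obtain ⟨e⟩ := e
  exact LinearMap.surjective_lcomp_of_finrank_eq_add (k := k) hfg hg
    (LinearMap.finrank_linearMap_eq_add_of_linearEquiv_prod e) LinearMap.id

theorem stmt_3 (k A : Type*) [Field k] [Ring A] [Algebra k A] [FiniteDimensional k A]
    (U W V : Type*)
    [AddCommGroup U] [Module A U] [Module k U] [IsScalarTower k A U] [SMulCommClass A k U]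
    [AddCommGroup W] [Module A W] [Module k W] [IsScalarTower k A W] [SMulCommClass A k W]
    [AddCommGroup V] [Module A V] [Module k V] [IsScalarTower k A V] [SMulCommClass A k V]
    [FiniteDimensional k U] [FiniteDimensional k W] [FiniteDimensional k V]
    (f : U →ₗ[A] W) (g : W →ₗ[A] V)
    (hf : Function.Injective f) (hg : Function.Surjective g)
    (hfg : Function.Exact f g)
    (e : Nonempty (W ≃ₗ[A] (U × V))) :
    ∃ r : W →ₗ[A] U, r ∘ₗ f = LinearMap.id :=
  stmt_3_general k A U W V f g hg hfg e
end

section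
/- Let R' = k[m², m³, n², n³] ⊆ k[m, n]. For every free R'-module F, the following complex is exact: F⁴ →ξη F⁴ →(ξ,η) F⁴ ⊕ F⁴, where on N = F⁴ (viewed as 2×2 matrices over F) the map ξ is left multiplication by [[m³, −m²],[m⁴, −m³]] and η is right multiplication by [[n³, n⁴],[−n², −n³]], and ξη denotes the composite. -/
open MvPolynomial

universe u v

/-- The subalgebra `R' = k[m², m³, n², n³]` of `k[m,n]`, with `m = X 0`, `n = X 1`. -/
noncomputable def Rc2 (k : Type u) [Field k] : Subalgebra k (MvPolynomial (Fin 2) k) :=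
  Algebra.adjoin k {(X 0 : MvPolynomial (Fin 2) k) ^ 2, (X 0 : MvPolynomial (Fin 2) k) ^ 3,
    (X 1 : MvPolynomial (Fin 2) k) ^ 2, (X 1 : MvPolynomial (Fin 2) k) ^ 3}

/-- The element `m²` of `R'`. -/
noncomputable def mm2 (k : Type u) [Field k] : Rc2 k :=
  ⟨(X 0 : MvPolynomial (Fin 2) k) ^ 2, Algebra.subset_adjoin (Set.mem_insert _ _)⟩

/-- The element `m³` of `R'`. -/
noncomputable def mm3 (k : Type u) [Field k] : Rc2 k :=
  ⟨(X 0 : MvPolynomial (Fin 2) k) ^ 3,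
    Algebra.subset_adjoin (Set.mem_insert_of_mem _ (Set.mem_insert _ _))⟩

/-- The element `n²` of `R'`. -/
noncomputable def nn2 (k : Type u) [Field k] : Rc2 k :=
  ⟨(X 1 : MvPolynomial (Fin 2) k) ^ 2,
    Algebra.subset_adjoin (Set.mem_insert_of_mem _ (Set.mem_insert_of_mem _
      (Set.mem_insert _ _)))⟩

/-- The element `n³` of `R'`. -/
noncomputable def nn3 (k : Type u) [Field k] : Rc2 k :=
  ⟨(X 1 : MvPolynomial (Fin 2) k) ^ 3,
    Algebra.subset_adjoin (Set.mem_insert_of_mem _ (Set.mem_insert_of_mem _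
      (Set.mem_insert_of_mem _ rfl)))⟩

/-- Left multiplication of a 2×2 matrix over `M` by the matrix `[[m³, −m²],[m⁴, −m³]]`. -/
noncomputable def xiMap (k : Type u) [Field k] (M : Type v) [AddCommGroup M]
    [Module (Rc2 k) M] (A : Fin 2 → Fin 2 → M) : Fin 2 → Fin 2 → M :=
  ![![mm3 k • A 0 0 - mm2 k • A 1 0, mm3 k • A 0 1 - mm2 k • A 1 1],
    ![(mm2 k * mm2 k) • A 0 0 - mm3 k • A 1 0, (mm2 k * mm2 k) • A 0 1 - mm3 k • A 1 1]]

/-- Right multiplication of a 2×2 matrix over `M` by the matrix `[[n³, n⁴],[−n², −n³]]`. -/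
noncomputable def etaMap (k : Type u) [Field k] (M : Type v) [AddCommGroup M]
    [Module (Rc2 k) M] (A : Fin 2 → Fin 2 → M) : Fin 2 → Fin 2 → M :=
  ![![nn3 k • A 0 0 - nn2 k • A 0 1, (nn2 k * nn2 k) • A 0 0 - nn3 k • A 0 1],
    ![nn3 k • A 1 0 - nn2 k • A 1 1, (nn2 k * nn2 k) • A 1 0 - nn3 k • A 1 1]]

/-- Property [P2] for an `R'`-module `M`: with `N` the 2×2 matrices over `M`, the complex
`N →ξη N →(ξ,η) N ⊕ N` is exact in the middle. -/
noncomputable def HasP2 (k : Type u) [Field k] (M : Type v) [AddCommGroup M]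
    [Module (Rc2 k) M] : Prop :=
  Function.Exact (fun A : Fin 2 → Fin 2 → M => xiMap k M (etaMap k M A))
    (fun A : Fin 2 → Fin 2 → M => (xiMap k M A, etaMap k M A))

/-!
Both maps have rank one: `ξ = (1, m)ᵀ (m³, −m²)` and `η = (n³, −n²)ᵀ (1, n)`. So a matrix `A`
over `R'` with `ξ A = η A = 0` has the shape `a • (1, m)ᵀ (1, n)` with `a ∈ k[m,n]`, and
`a, m a, n a ∈ R'`. Since no element of `R'` contains a monomial of degree one in `m` or in `n`,
this forces `m² n² ∣ a`. As `k[m,n] = R' + m R' + n R' + m n R'`, we get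
`a = m³n³ c₁₁ + m³n² c₁₀ + m²n³ c₀₁ + m²n² c₀₀` with `cᵢⱼ ∈ R'`, which is the corner entry of
`ξ η B` for `B = [[c₁₁, −c₁₀], [−c₀₁, c₀₀]]`. For a free module, `ξ` and `η` act coordinatewise
in a basis, so the problem splits into copies of this one.
-/

namespace MvPolynomial

variable {σ : Type*}

section CommSemiring

open scoped Pointwise

variable (R : Type*) [CommSemiring R]

noncomputable def restrictSupportSubalgebra (S : AddSubmonoid (σ →₀ ℕ)) :
    Subalgebra R (MvPolynomial σ R) :=
  (restrictSupport R (S : Set (σ →₀ ℕ))).toSubalgebra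
    ((monomial_mem_restrictSupport R).2 (Or.inl S.zero_mem))
    fun _ _ hx hy => by
      have hSS : (S : Set (σ →₀ ℕ)) + (S : Set (σ →₀ ℕ)) ⊆ S :=
        Set.add_subset_iff.2 fun _ ha _ hb => S.add_mem ha hb
      exact restrictSupport_mono R hSS (restrictSupport_add R _ _ ▸ Submodule.mul_mem_mul hx hy)

variable {R}

lemma mem_restrictSupportSubalgebra {S : AddSubmonoid (σ →₀ ℕ)} {p : MvPolynomial σ R} :
    p ∈ restrictSupportSubalgebra R S ↔ ↑p.support ⊆ (S : Set (σ →₀ ℕ)) :=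
  Iff.rfl

lemma monomial_one_dvd_of_coeff_eq_zero {s : σ →₀ ℕ} {p : MvPolynomial σ R}
    (h : ∀ d, ¬s ≤ d → coeff d p = 0) : monomial s 1 ∣ p := by
  rw [monomial_one_dvd_iff_modMonomial_eq_zero]
  ext d
  by_cases hd : s ≤ d
  · simp [coeff_modMonomial_of_le _ hd]
  · simp [coeff_modMonomial_of_not_le _ hd, h d hd]

end CommSemiring

lemma eq_X_mul_of_X_pow_three_mul_sub_eq_zero {R : Type*} [CommRing R] [IsDomain R] {i : σ}
    {a b : MvPolynomial σ R} (h : X i ^ 3 * a - X i ^ 2 * b = 0) : b = X i * a :=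
  mul_left_cancel₀ (pow_ne_zero 2 (X_ne_zero i)) (by linear_combination -h)

end MvPolynomial

def exponentsNeOne (σ : Type*) : AddSubmonoid (σ →₀ ℕ) where
  carrier := {d | ∀ i, d i ≠ 1}
  add_mem' ha hb i := by have := ha i; have := hb i; simp only [Finsupp.add_apply]; omega
  zero_mem' _ := zero_ne_one

section Rc2

variable {k : Type u} [Field k]

lemma Rc2_le_restrictSupportSubalgebra :
    Rc2 k ≤ restrictSupportSubalgebra k (exponentsNeOne (Fin 2)) := by
  have hpow (i : Fin 2) (n : ℕ) (hn : n ≠ 1) :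
      (X i : MvPolynomial (Fin 2) k) ^ n ∈
        restrictSupportSubalgebra k (exponentsNeOne (Fin 2)) := by
    rw [X_pow_eq_monomial]
    exact (monomial_mem_restrictSupport k).2
      (Or.inl fun j => by rw [Finsupp.single_apply]; split_ifs <;> omega)
  refine Algebra.adjoin_le ?_
  rintro p (rfl | rfl | rfl | rfl) <;> exact hpow _ _ (by norm_num)

lemma coeff_eq_zero_of_mem_Rc2 {p : MvPolynomial (Fin 2) k} (hp : p ∈ Rc2 k)
    {d : Fin 2 →₀ ℕ} {i : Fin 2} (hd : d i = 1) : coeff d p = 0 := by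
  by_contra h
  exact mem_restrictSupportSubalgebra.1 (Rc2_le_restrictSupportSubalgebra hp)
    (mem_support_iff.2 h) i hd

lemma coeff_eq_zero_of_X_mul_mem_Rc2 {p : MvPolynomial (Fin 2) k} {i : Fin 2} (hp : p ∈ Rc2 k)
    (hXp : X i * p ∈ Rc2 k) {d : Fin 2 →₀ ℕ} (hd : d i ≤ 1) : coeff d p = 0 := by
  obtain hd | hd : d i = 0 ∨ d i = 1 := by omega
  · rw [← coeff_X_mul d i]
    exact coeff_eq_zero_of_mem_Rc2 hXp (i := i) (by simp [hd])
  · exact coeff_eq_zero_of_mem_Rc2 hp hd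

lemma X_sq_mul_X_sq_dvd_of_mem_Rc2 {p : MvPolynomial (Fin 2) k} (hp : p ∈ Rc2 k)
    (h₀ : X 0 * p ∈ Rc2 k) (h₁ : X 1 * p ∈ Rc2 k) : X 0 ^ 2 * X 1 ^ 2 ∣ p := by
  have hmon : (X 0 ^ 2 * X 1 ^ 2 : MvPolynomial (Fin 2) k) =
      monomial (Finsupp.single 0 2 + Finsupp.single 1 2) 1 := by
    simp [X_pow_eq_monomial, monomial_mul]
  rw [hmon]
  refine monomial_one_dvd_of_coeff_eq_zero fun d hd => ?_
  obtain h | h : d 0 ≤ 1 ∨ d 1 ≤ 1 := by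
    by_contra! h
    exact hd fun i => by fin_cases i <;> simp <;> omega
  · exact coeff_eq_zero_of_X_mul_mem_Rc2 hp h₀ h
  · exact coeff_eq_zero_of_X_mul_mem_Rc2 hp h₁ h

lemma exists_eq_add_X_mul_Rc2 (q : MvPolynomial (Fin 2) k) :
    ∃ c₀₀ c₁₀ c₀₁ c₁₁ : Rc2 k, q = (c₀₀ : MvPolynomial (Fin 2) k) +
      X 0 * (c₁₀ : MvPolynomial (Fin 2) k) + X 1 * (c₀₁ : MvPolynomial (Fin 2) k) +
      X 0 * X 1 * (c₁₁ : MvPolynomial (Fin 2) k) := by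
  induction q using MvPolynomial.induction_on with
  | C a => exact ⟨algebraMap k (Rc2 k) a, 0, 0, 0, by simp⟩
  | add p q hp hq =>
    obtain ⟨a₀₀, a₁₀, a₀₁, a₁₁, rfl⟩ := hp
    obtain ⟨b₀₀, b₁₀, b₀₁, b₁₁, rfl⟩ := hq
    exact ⟨a₀₀ + b₀₀, a₁₀ + b₁₀, a₀₁ + b₀₁, a₁₁ + b₁₁, by push_cast; ring⟩
  | mul_X p i hp =>
    obtain ⟨c₀₀, c₁₀, c₀₁, c₁₁, rfl⟩ := hp
    fin_cases i <;> simp only [Fin.zero_eta, Fin.mk_one]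
    · exact ⟨mm2 k * c₁₀, c₀₀, mm2 k * c₁₁, c₀₁, by simp only [MulMemClass.coe_mul, mm2]; ring⟩
    · exact ⟨nn2 k * c₀₁, nn2 k * c₁₁, c₀₀, c₁₀, by simp only [MulMemClass.coe_mul, nn2]; ring⟩

end Rc2

section Complex

variable {k : Type u} [Field k] {M : Type v} [AddCommGroup M] [Module (Rc2 k) M]

lemma mm3_mul_mm3 : mm3 k * mm3 k = mm2 k * mm2 k * mm2 k :=
  Subtype.ext <| by simp only [MulMemClass.coe_mul, mm2, mm3]; ring

lemma nn3_mul_nn3 : nn3 k * nn3 k = nn2 k * nn2 k * nn2 k :=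
  Subtype.ext <| by simp only [MulMemClass.coe_mul, nn2, nn3]; ring

lemma xiMap_xiMap (A : Fin 2 → Fin 2 → M) : xiMap k M (xiMap k M A) = 0 := by
  ext p q
  fin_cases p <;> fin_cases q <;>
    simp only [xiMap, Fin.zero_eta, Fin.mk_one, Fin.isValue, Matrix.cons_val',
      Matrix.cons_val_zero, Matrix.cons_val_one, Matrix.cons_val_fin_one, Pi.zero_apply]
  · linear_combination (norm := module) mm3_mul_mm3 (k := k) • A 0 0
  · linear_combination (norm := module) mm3_mul_mm3 (k := k) • A 0 1
  · linear_combination (norm := module) mm3_mul_mm3 (k := k) • A 1 0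
  · linear_combination (norm := module) mm3_mul_mm3 (k := k) • A 1 1

lemma etaMap_etaMap (A : Fin 2 → Fin 2 → M) : etaMap k M (etaMap k M A) = 0 := by
  ext p q
  fin_cases p <;> fin_cases q <;>
    simp only [etaMap, Fin.zero_eta, Fin.mk_one, Fin.isValue, Matrix.cons_val',
      Matrix.cons_val_zero, Matrix.cons_val_one, Matrix.cons_val_fin_one, Pi.zero_apply]
  · linear_combination (norm := module) nn3_mul_nn3 (k := k) • A 0 0
  · linear_combination (norm := module) nn3_mul_nn3 (k := k) • A 0 1
  · linear_combination (norm := module) nn3_mul_nn3 (k := k) • A 1 0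
  · linear_combination (norm := module) nn3_mul_nn3 (k := k) • A 1 1

lemma xiMap_etaMap_comm (A : Fin 2 → Fin 2 → M) :
    xiMap k M (etaMap k M A) = etaMap k M (xiMap k M A) := by
  ext p q
  fin_cases p <;> fin_cases q <;>
    simp only [xiMap, etaMap, Fin.zero_eta, Fin.mk_one, Fin.isValue, Matrix.cons_val',
      Matrix.cons_val_zero, Matrix.cons_val_one, Matrix.cons_val_fin_one] <;> module

lemma hasP2_of_forall_exists
    (h : ∀ A, xiMap k M A = 0 → etaMap k M A = 0 → ∃ B, xiMap k M (etaMap k M B) = A) :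
    HasP2 k M := by
  intro A
  refine ⟨fun hA => h A (congrArg Prod.fst hA) (congrArg Prod.snd hA), ?_⟩
  rintro ⟨B, rfl⟩
  refine Prod.ext (xiMap_xiMap _) ?_
  change etaMap k M (xiMap k M (etaMap k M B)) = 0
  rw [xiMap_etaMap_comm, etaMap_etaMap]

variable {M' : Type*} [AddCommGroup M'] [Module (Rc2 k) M']

lemma xiMap_map (f : M →ₗ[Rc2 k] M') (A : Fin 2 → Fin 2 → M) :
    xiMap k M' (fun p q => f (A p q)) = fun p q => f (xiMap k M A p q) := by
  ext p q
  fin_cases p <;> fin_cases q <;> simp [xiMap]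

lemma etaMap_map (f : M →ₗ[Rc2 k] M') (A : Fin 2 → Fin 2 → M) :
    etaMap k M' (fun p q => f (A p q)) = fun p q => f (etaMap k M A p q) := by
  ext p q
  fin_cases p <;> fin_cases q <;> simp [etaMap]

lemma xiMap_etaMap_map (f : M →ₗ[Rc2 k] M') (A : Fin 2 → Fin 2 → M) :
    xiMap k M' (etaMap k M' fun p q => f (A p q)) =
      fun p q => f (xiMap k M (etaMap k M A) p q) := by
  rw [etaMap_map, xiMap_map]

end Complex

section Exactness

variable {k : Type u} [Field k]

lemma exists_xiMap_etaMap_eq_of_Rc2 (A : Fin 2 → Fin 2 → Rc2 k) (hξ : xiMap k (Rc2 k) A = 0)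
    (hη : etaMap k (Rc2 k) A = 0) : ∃ B, xiMap k (Rc2 k) (etaMap k (Rc2 k) B) = A := by
  have entry (M : Fin 2 → Fin 2 → Rc2 k) (hM : M = 0) (p q : Fin 2) :
      ((M p q : Rc2 k) : MvPolynomial (Fin 2) k) = 0 := by simp [hM]
  have h₁₀ : (A 1 0 : MvPolynomial (Fin 2) k) = X 0 * (A 0 0 : MvPolynomial (Fin 2) k) :=
    eq_X_mul_of_X_pow_three_mul_sub_eq_zero (by simpa [xiMap, mm2, mm3] using entry _ hξ 0 0)
  have h₀₁ : (A 0 1 : MvPolynomial (Fin 2) k) = X 1 * (A 0 0 : MvPolynomial (Fin 2) k) :=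
    eq_X_mul_of_X_pow_three_mul_sub_eq_zero (by simpa [etaMap, nn2, nn3] using entry _ hη 0 0)
  have h₁₁ : (A 1 1 : MvPolynomial (Fin 2) k) = X 1 * (A 1 0 : MvPolynomial (Fin 2) k) :=
    eq_X_mul_of_X_pow_three_mul_sub_eq_zero (by simpa [etaMap, nn2, nn3] using entry _ hη 1 0)
  obtain ⟨q, hq⟩ := X_sq_mul_X_sq_dvd_of_mem_Rc2 (A 0 0).2 (h₁₀ ▸ (A 1 0).2) (h₀₁ ▸ (A 0 1).2)
  obtain ⟨c₀₀, c₁₀, c₀₁, c₁₁, rfl⟩ := exists_eq_add_X_mul_Rc2 q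
  refine ⟨![![c₁₁, -c₁₀], ![-c₀₁, c₀₀]], funext₂ fun p r => Subtype.ext ?_⟩
  fin_cases p <;> fin_cases r <;>
    simp only [xiMap, etaMap, mm2, mm3, nn2, nn3, Fin.zero_eta, Fin.mk_one, Fin.isValue,
      Matrix.cons_val', Matrix.cons_val_zero, Matrix.cons_val_one, Matrix.cons_val_fin_one,
      smul_eq_mul, AddSubgroupClass.coe_sub, MulMemClass.coe_mul, NegMemClass.coe_neg]
  · linear_combination -hq
  · linear_combination -X 1 * hq - h₀₁
  · linear_combination -X 0 * hq - h₁₀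
  · linear_combination -X 0 * X 1 * hq - h₁₁ - X 1 * h₁₀

lemma hasP2_of_basis {ι : Type*} {F : Type v} [AddCommGroup F] [Module (Rc2 k) F]
    (b : Module.Basis ι (Rc2 k) F) : HasP2 k F := by
  classical
  refine hasP2_of_forall_exists fun A hξ hη => ?_
  have hcoord (i : ι) :
      ∃ B, xiMap k (Rc2 k) (etaMap k (Rc2 k) B) = fun p q => b.coord i (A p q) :=
    exists_xiMap_etaMap_eq_of_Rc2 _
      (by rw [xiMap_map, hξ]; exact funext₂ fun _ _ => map_zero _)
      (by rw [etaMap_map, hη]; exact funext₂ fun _ _ => map_zero _)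
  choose B hB using hcoord
  let s : Finset ι := Finset.univ.biUnion fun pq : Fin 2 × Fin 2 => (b.repr (A pq.1 pq.2)).support
  let B' : Fin 2 → Fin 2 → F := fun p q => ∑ i ∈ s, B i p q • b i
  refine ⟨B', funext₂ fun p q => b.ext_elem fun j => ?_⟩
  have hB'j : (fun p q => b.coord j (B' p q)) = if j ∈ s then B j else 0 := by
    funext p q
    split_ifs <;> simp [B', Finsupp.single_apply, *]
  have hξηj := congrFun₂ (xiMap_etaMap_map (b.coord j) B') p q
  rw [hB'j] at hξηj
  split_ifs at hξηj with hj
  · simpa [hB] using hξηj.symm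
  · have hAj : b.repr (A p q) j = 0 := Finsupp.notMem_support_iff.1 fun h =>
      hj (Finset.mem_biUnion.2 ⟨(p, q), Finset.mem_univ _, h⟩)
    rw [hAj, ← Module.Basis.coord_apply, ← hξηj]
    fin_cases p <;> fin_cases q <;> simp [xiMap, etaMap]

end Exactness

theorem stmt_7 (k : Type u) [Field k] (F : Type v) [AddCommGroup F] [Module (Rc2 k) F]
    [Module.Free (Rc2 k) F] : HasP2 k F :=
  hasP2_of_basis (Module.Free.chooseBasis (Rc2 k) F)
end

section
/- Let Λ = kQ/(f² − hg) where Q is the quiver with two vertices y, z, a loop f at z, an arrow g: z → y, and an arrow h: y → z. Then the set B = {ε_y, ε_z, f^{i+1}, g f^i, f^i h, g f^i h : i ≥ 0} is a k-basis of Λ, and it is multiplicative: the product of any two elements of B is either an element of B or zero. -/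
/-- Generators of the path algebra of the quiver with vertices `y, z`, a loop `f` at `z`,
and arrows `g : z → y`, `h : y → z`: the two vertex idempotents and the three arrows. -/
inductive QGen | ey | ez | f | g | h

/-- The relations presenting the path algebra `kQ` modulo `(f² − hg)` as a quotient of the
free algebra on the generators: `ε_y + ε_z = 1`, the `ε`'s are orthogonal idempotents,
incidence relations of arrows with vertices, and `f·f = h·g`. -/
inductive QRel (k : Type*) [Field k] : FreeAlgebra k QGen → FreeAlgebra k QGen → Prop
  | sum : QRel k (FreeAlgebra.ι k QGen.ey + FreeAlgebra.ι k QGen.ez) 1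
  | ey_idem : QRel k (FreeAlgebra.ι k QGen.ey * FreeAlgebra.ι k QGen.ey)
      (FreeAlgebra.ι k QGen.ey)
  | ez_idem : QRel k (FreeAlgebra.ι k QGen.ez * FreeAlgebra.ι k QGen.ez)
      (FreeAlgebra.ι k QGen.ez)
  | ey_ez : QRel k (FreeAlgebra.ι k QGen.ey * FreeAlgebra.ι k QGen.ez) 0
  | ez_ey : QRel k (FreeAlgebra.ι k QGen.ez * FreeAlgebra.ι k QGen.ey) 0
  | f_left : QRel k (FreeAlgebra.ι k QGen.ez * FreeAlgebra.ι k QGen.f)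
      (FreeAlgebra.ι k QGen.f)
  | f_right : QRel k (FreeAlgebra.ι k QGen.f * FreeAlgebra.ι k QGen.ez)
      (FreeAlgebra.ι k QGen.f)
  | g_left : QRel k (FreeAlgebra.ι k QGen.ey * FreeAlgebra.ι k QGen.g)
      (FreeAlgebra.ι k QGen.g)
  | g_right : QRel k (FreeAlgebra.ι k QGen.g * FreeAlgebra.ι k QGen.ez)
      (FreeAlgebra.ι k QGen.g)
  | h_left : QRel k (FreeAlgebra.ι k QGen.ez * FreeAlgebra.ι k QGen.h)
      (FreeAlgebra.ι k QGen.h)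
  | h_right : QRel k (FreeAlgebra.ι k QGen.h * FreeAlgebra.ι k QGen.ey)
      (FreeAlgebra.ι k QGen.h)
  | main : QRel k (FreeAlgebra.ι k QGen.f * FreeAlgebra.ι k QGen.f)
      (FreeAlgebra.ι k QGen.h * FreeAlgebra.ι k QGen.g)

/-- The algebra `Λ = kQ/(f² − hg)`. -/
noncomputable def Lam (k : Type*) [Field k] : Type _ := RingQuot (QRel k)

noncomputable instance (k : Type*) [Field k] : Ring (Lam k) :=
  inferInstanceAs (Ring (RingQuot (QRel k)))

noncomputable instance (k : Type*) [Field k] : Algebra k (Lam k) :=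
  inferInstanceAs (Algebra k (RingQuot (QRel k)))

/-- The image of `ε_y` in `Λ`. -/
noncomputable def Ey (k : Type*) [Field k] : Lam k :=
  RingQuot.mkAlgHom k (QRel k) (FreeAlgebra.ι k QGen.ey)

/-- The image of `ε_z` in `Λ`. -/
noncomputable def Ez (k : Type*) [Field k] : Lam k :=
  RingQuot.mkAlgHom k (QRel k) (FreeAlgebra.ι k QGen.ez)

/-- The image of the loop `f` in `Λ`. -/
noncomputable def Fg (k : Type*) [Field k] : Lam k :=
  RingQuot.mkAlgHom k (QRel k) (FreeAlgebra.ι k QGen.f)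

/-- The image of the arrow `g` in `Λ`. -/
noncomputable def Gg (k : Type*) [Field k] : Lam k :=
  RingQuot.mkAlgHom k (QRel k) (FreeAlgebra.ι k QGen.g)

/-- The image of the arrow `h` in `Λ`. -/
noncomputable def Hg (k : Type*) [Field k] : Lam k :=
  RingQuot.mkAlgHom k (QRel k) (FreeAlgebra.ι k QGen.h)

/-- Index set for the claimed basis `B = {ε_y, ε_z, f^{i+1}, g f^i, f^i h, g f^i h}`. -/
inductive BIdx | ey | ez | fpow (i : ℕ) | gf (i : ℕ) | fh (i : ℕ) | gfh (i : ℕ)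

/-- The family `B = {ε_y, ε_z, f^{i+1}, g f^i, f^i h, g f^i h : i ≥ 0}` in `Λ`. -/
noncomputable def fam (k : Type*) [Field k] : BIdx → Lam k
  | .ey => Ey k
  | .ez => Ez k
  | .fpow i => Fg k ^ (i + 1)
  | .gf i => Gg k * Fg k ^ i
  | .fh i => Fg k ^ i * Hg k
  | .gfh i => Gg k * Fg k ^ i * Hg k

/-!
Each element of `B` is a path `ε_t · b · ε_s` from a vertex `s` to a vertex `t`, so a product
`b * b'` vanishes unless the source of `b` is the target of `b'`; in the remaining cases the
relation `hg = f²` turns it into another element of `B`. Hence the span of `B` is a subalgebra,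
and it contains the generators, so `B` spans `Λ`. For linear independence, represent `Λ` by
`2 × 2` matrices over `k[X]` indexed by the vertices, with `ε_v ↦ E_vv`, `f ↦ X E_zz`,
`g ↦ E_yz`, `h ↦ X² E_zy`: the elements of `B` go to the distinct monomial matrix units
`X^d E_ts`.
-/

inductive QVertex | y | z
  deriving DecidableEq

instance : Fintype QVertex := ⟨{.y, .z}, fun v => by cases v <;> simp⟩

namespace BIdx

def ofVertex : QVertex → BIdx
  | .y => ey
  | .z => ez

def target : BIdx → QVertex
  | ey | gf _ | gfh _ => .y
  | ez | fpow _ | fh _ => .z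

def source : BIdx → QVertex
  | ey | fh _ | gfh _ => .y
  | ez | fpow _ | gf _ => .z

def degree : BIdx → ℕ
  | ey | ez => 0
  | fpow i => i + 1
  | gf i => i
  | fh i | gfh i => i + 2

theorem injective_target_source_degree :
    Function.Injective fun x : BIdx => (x.target, x.source, x.degree) := by
  intro a b h
  cases a <;> cases b <;> simp_all [target, source, degree]

end BIdx

namespace Matrix

variable {n R : Type*} [DecidableEq n] [Fintype n] [Semiring R]

theorem single_mul_single_pow (i j : n) (a b : R) (m : ℕ) :
    single i j a * single j j b ^ m = single i j (a * b ^ m) := by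
  induction m with
  | zero => rw [pow_zero, pow_zero, mul_one, mul_one]
  | succ m ih => rw [pow_succ, ← mul_assoc, ih, single_mul_single_same, pow_succ, mul_assoc]

theorem single_pow_mul_single (i j : n) (a b : R) (m : ℕ) :
    single i i b ^ m * single i j a = single i j (b ^ m * a) := by
  induction m with
  | zero => rw [pow_zero, pow_zero, one_mul, one_mul]
  | succ m ih => rw [pow_succ', mul_assoc, ih, single_mul_single_same, pow_succ', mul_assoc]

end Matrix

namespace Lam

variable (k : Type*) [Field k]

open Polynomial Matrix Submodule Set

local notation "E" => Ey k
local notation "Z" => Ez k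
local notation "F" => Fg k
local notation "G" => Gg k
local notation "H" => Hg k

theorem ey_add_ez : E + Z = 1 :=
  (map_add _ _ _).symm.trans ((RingQuot.mkAlgHom_rel k (s := QRel k) .sum).trans (map_one _))

theorem ey_mul_ey : E * E = E :=
  (map_mul _ _ _).symm.trans (RingQuot.mkAlgHom_rel k (s := QRel k) .ey_idem)

theorem ez_mul_ez : Z * Z = Z :=
  (map_mul _ _ _).symm.trans (RingQuot.mkAlgHom_rel k (s := QRel k) .ez_idem)

theorem ey_mul_ez : E * Z = 0 :=
  (map_mul _ _ _).symm.trans ((RingQuot.mkAlgHom_rel k (s := QRel k) .ey_ez).trans (map_zero _))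

theorem ez_mul_ey : Z * E = 0 :=
  (map_mul _ _ _).symm.trans ((RingQuot.mkAlgHom_rel k (s := QRel k) .ez_ey).trans (map_zero _))

theorem ez_mul_fg : Z * F = F :=
  (map_mul _ _ _).symm.trans (RingQuot.mkAlgHom_rel k (s := QRel k) .f_left)

theorem fg_mul_ez : F * Z = F :=
  (map_mul _ _ _).symm.trans (RingQuot.mkAlgHom_rel k (s := QRel k) .f_right)

theorem ey_mul_gg : E * G = G :=
  (map_mul _ _ _).symm.trans (RingQuot.mkAlgHom_rel k (s := QRel k) .g_left)

theorem gg_mul_ez : G * Z = G :=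
  (map_mul _ _ _).symm.trans (RingQuot.mkAlgHom_rel k (s := QRel k) .g_right)

theorem ez_mul_hg : Z * H = H :=
  (map_mul _ _ _).symm.trans (RingQuot.mkAlgHom_rel k (s := QRel k) .h_left)

theorem hg_mul_ey : H * E = H :=
  (map_mul _ _ _).symm.trans (RingQuot.mkAlgHom_rel k (s := QRel k) .h_right)

theorem fg_mul_fg : F * F = H * G :=
  (map_mul _ _ _).symm.trans ((RingQuot.mkAlgHom_rel k (s := QRel k) .main).trans (map_mul _ _ _))

theorem commute_ez_fg_pow (n : ℕ) : Commute Z (F ^ n) :=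
  Commute.pow_right ((ez_mul_fg k).trans (fg_mul_ez k).symm) n

theorem fg_pow_mul_hg_mul_gg_mul_fg_pow (i j : ℕ) :
    F ^ i * H * (G * F ^ j) = F ^ (i + j + 2) := by
  rw [mul_assoc, ← mul_assoc H, ← fg_mul_fg, ← sq, ← pow_add, ← pow_add, add_comm 2 j,
    add_assoc]

theorem fam_ofVertex_mul_fam_ofVertex_of_ne {u v : QVertex} (h : u ≠ v) :
    fam k (.ofVertex u) * fam k (.ofVertex v) = 0 := by
  cases u <;> cases v
  exacts [absurd rfl h, ey_mul_ez k, ez_mul_ey k, absurd rfl h]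

theorem fam_target_mul (x : BIdx) : fam k (.ofVertex x.target) * fam k x = fam k x := by
  cases x <;> simp only [fam, BIdx.target, BIdx.ofVertex]
  case ey => exact ey_mul_ey k
  case ez => exact ez_mul_ez k
  case fpow i => rw [pow_succ', ← mul_assoc, ez_mul_fg]
  case gf i => rw [← mul_assoc, ey_mul_gg]
  case fh i => rw [← mul_assoc, (commute_ez_fg_pow k i).eq, mul_assoc, ez_mul_hg]
  case gfh i => rw [← mul_assoc, ← mul_assoc, ey_mul_gg]

theorem fam_mul_source (x : BIdx) : fam k x * fam k (.ofVertex x.source) = fam k x := by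
  cases x <;> simp only [fam, BIdx.source, BIdx.ofVertex]
  case ey => exact ey_mul_ey k
  case ez => exact ez_mul_ez k
  case fpow i => rw [pow_succ, mul_assoc, fg_mul_ez]
  case gf i => rw [mul_assoc, ← (commute_ez_fg_pow k i).eq, ← mul_assoc, gg_mul_ez]
  case fh i => rw [mul_assoc, hg_mul_ey]
  case gfh i => rw [mul_assoc, hg_mul_ey]

theorem fam_ofVertex_mul {u : QVertex} {x : BIdx} (h : u = x.target) :
    fam k (.ofVertex u) * fam k x = fam k x :=
  h ▸ fam_target_mul k x

theorem fam_mul_fam_ofVertex {x : BIdx} {u : QVertex} (h : x.source = u) :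
    fam k x * fam k (.ofVertex u) = fam k x :=
  h ▸ fam_mul_source k x

theorem fam_mul_fam_of_source_ne_target {i j : BIdx} (h : i.source ≠ j.target) :
    fam k i * fam k j = 0 := by
  rw [← fam_mul_source k i, ← fam_target_mul k j, mul_assoc,
    ← mul_assoc (fam k (.ofVertex _)), fam_ofVertex_mul_fam_ofVertex_of_ne k h, zero_mul,
    mul_zero]

theorem exists_fam_mul_fam_eq_of_source_eq_target {i j : BIdx} (h : i.source = j.target) :
    ∃ l, fam k i * fam k j = fam k l := by
  cases i
  case ey | ez => exact ⟨j, fam_ofVertex_mul k h⟩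
  all_goals cases j
  case fpow.ez | gf.ez | fh.ey | gfh.ey => exact ⟨_, fam_mul_fam_ofVertex k h⟩
  all_goals simp only [BIdx.source, BIdx.target, reduceCtorEq] at h
  all_goals simp only [fam]
  case fpow.fpow i j => exact ⟨.fpow (i + 1 + j), by rw [← pow_add]; rfl⟩
  case fpow.fh i j => exact ⟨.fh (i + 1 + j), by rw [← mul_assoc, ← pow_add]⟩
  case gf.fpow i j => exact ⟨.gf (i + j + 1), by rw [mul_assoc, ← pow_add]; rfl⟩
  case gf.fh i j => exact ⟨.gfh (i + j), by rw [← mul_assoc, mul_assoc G, ← pow_add]⟩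
  case fh.gf i j => exact ⟨.fpow (i + j + 1), fg_pow_mul_hg_mul_gg_mul_fg_pow k i j⟩
  case fh.gfh i j =>
    exact ⟨.fh (i + j + 2), by rw [← mul_assoc, fg_pow_mul_hg_mul_gg_mul_fg_pow]⟩
  case gfh.gf i j =>
    exact ⟨.gf (i + j + 2), by
      rw [mul_assoc G, mul_assoc G, fg_pow_mul_hg_mul_gg_mul_fg_pow]⟩
  case gfh.gfh i j =>
    exact ⟨.gfh (i + j + 2), by
      rw [← mul_assoc, mul_assoc G, mul_assoc G, fg_pow_mul_hg_mul_gg_mul_fg_pow]⟩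

theorem fam_mul_fam_eq_zero_or_exists (i j : BIdx) :
    fam k i * fam k j = 0 ∨ ∃ l, fam k i * fam k j = fam k l := by
  by_cases h : i.source = j.target
  · exact .inr (exists_fam_mul_fam_eq_of_source_eq_target k h)
  · exact .inl (fam_mul_fam_of_source_ne_target k h)

theorem eq_top_of_generators_mem {A : Subalgebra k (Lam k)} (hE : E ∈ A) (hZ : Z ∈ A)
    (hF : F ∈ A) (hG : G ∈ A) (hH : H ∈ A) : A = ⊤ := by
  rw [eq_top_iff]
  rintro x -
  obtain ⟨x, rfl⟩ := RingQuot.mkAlgHom_surjective k (QRel k) x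
  induction x using FreeAlgebra.induction with
  | grade0 r => exact ((RingQuot.mkAlgHom k (QRel k)).commutes r).symm ▸ A.algebraMap_mem r
  | grade1 q => cases q <;> assumption
  | mul a b ha hb => rw [map_mul]; exact A.mul_mem ha hb
  | add a b ha hb => rw [map_add]; exact A.add_mem ha hb

theorem span_range_fam : span k (range (fam k)) = ⊤ := by
  set S := span k (range (fam k))
  have fam_mem (x : BIdx) : fam k x ∈ S := subset_span (mem_range_self x)
  have one_mem : (1 : Lam k) ∈ S := ey_add_ez k ▸ add_mem (fam_mem .ey) (fam_mem .ez)
  have mul_mem (x y : Lam k) (hx : x ∈ S) (hy : y ∈ S) : x * y ∈ S := by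
    refine span_le.2 ?_ ((span_mul_span k _ _).le (mul_mem_mul hx hy))
    rintro _ ⟨_, ⟨i, rfl⟩, _, ⟨j, rfl⟩, rfl⟩
    rcases fam_mul_fam_eq_zero_or_exists k i j with h | ⟨l, h⟩ <;> dsimp only <;> rw [h]
    exacts [zero_mem S, fam_mem l]
  have hA := eq_top_of_generators_mem k (A := S.toSubalgebra one_mem mul_mem)
    (fam_mem .ey) (fam_mem .ez) (by simpa [fam] using fam_mem (.fpow 0))
    (by simpa [fam] using fam_mem (.gf 0)) (by simpa [fam] using fam_mem (.fh 0))
  exact eq_top_iff.2 fun x _ =>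
    (hA.symm ▸ Algebra.mem_top : x ∈ S.toSubalgebra one_mem mul_mem)

-- `h` carries `X²` so that `hg = f²` holds.
noncomputable def matrixGen : QGen → Matrix QVertex QVertex k[X]
  | .ey => single .y .y 1
  | .ez => single .z .z 1
  | .f => single .z .z X
  | .g => single .y .z 1
  | .h => single .z .y (X ^ 2)

theorem matrixGen_rel ⦃x y : FreeAlgebra k QGen⦄ (r : QRel k x y) :
    FreeAlgebra.lift k (matrixGen k) x = FreeAlgebra.lift k (matrixGen k) y := by
  cases r <;> simp only [map_mul, map_add, map_one, map_zero, FreeAlgebra.lift_ι_apply,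
    matrixGen, single_mul_single_same, single_mul_single_of_ne, ne_eq, reduceCtorEq,
    not_false_eq_true, mul_one, one_mul, sq]
  case sum => ext (_ | _) (_ | _) <;> simp [single]

noncomputable def toMatrix : Lam k →ₐ[k] Matrix QVertex QVertex k[X] :=
  RingQuot.liftAlgHom k ⟨FreeAlgebra.lift k (matrixGen k), matrixGen_rel k⟩

theorem toMatrix_mk_ι (q : QGen) :
    toMatrix k (RingQuot.mkAlgHom k (QRel k) (FreeAlgebra.ι k q)) = matrixGen k q :=
  (RingQuot.liftAlgHom_mkAlgHom_apply k _ _ _).trans (FreeAlgebra.lift_ι_apply _ _)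

theorem toMatrix_fam (x : BIdx) :
    toMatrix k (fam k x) = single x.target x.source (X ^ x.degree) := by
  have hE : toMatrix k E = single .y .y 1 := toMatrix_mk_ι k .ey
  have hZ : toMatrix k Z = single .z .z 1 := toMatrix_mk_ι k .ez
  have hF : toMatrix k F = single .z .z X := toMatrix_mk_ι k .f
  have hG : toMatrix k G = single .y .z 1 := toMatrix_mk_ι k .g
  have hH : toMatrix k H = single .z .y (X ^ 2) := toMatrix_mk_ι k .h
  cases x <;> simp only [fam, map_mul, map_pow, hE, hZ, hF, hG, hH, BIdx.target, BIdx.source,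
    BIdx.degree, single_mul_single_pow, single_pow_mul_single, single_mul_single_same, pow_zero,
    one_mul, ← pow_add]
  rw [pow_succ', single_mul_single_pow, ← pow_succ']

theorem linearIndependent_fam : LinearIndependent k (fam k) := by
  refine .of_comp (toMatrix k).toLinearMap ?_
  have : (toMatrix k).toLinearMap ∘ fam k = (basisMonomials k).matrix QVertex QVertex ∘
      fun x : BIdx => (x.target, x.source, x.degree) := by
    ext1 x
    simp [toMatrix_fam, coe_basisMonomials, X_pow_eq_monomial]
  rw [this]
  exact (Module.Basis.linearIndependent _).comp _ BIdx.injective_target_source_degree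

end Lam

theorem stmt_16 (k : Type*) [Field k] :
    (∃ B : Module.Basis BIdx k (Lam k), ∀ x, B x = fam k x) ∧
    ∀ i j, fam k i * fam k j = 0 ∨ ∃ l, fam k i * fam k j = fam k l :=
  ⟨⟨.mk (Lam.linearIndependent_fam k) (Lam.span_range_fam k).ge, Module.Basis.mk_apply _ _⟩,
    Lam.fam_mul_fam_eq_zero_or_exists k⟩
end

section
/- Let Λ = kQ/(f² − hg) as above, with idempotent ε_y. Then the algebra ε_y Λ ε_y is commutative and isomorphic, as a k-algebra, to the subalgebra k[m², m³] of the polynomial ring k[m], via an isomorphism sending g f^i h to m^{i+2} for all i ≥ 0 and ε_y to 1. -/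
open Polynomial

/-- The subalgebra `k[m², m³]` of the polynomial ring `k[m]`. -/
noncomputable def Rcusp (k : Type*) [Field k] : Subalgebra k (Polynomial k) :=
  Algebra.adjoin k {(X : Polynomial k) ^ 2, (X : Polynomial k) ^ 3}

lemma pow_mem_Rcusp (k : Type*) [Field k] : ∀ i : ℕ, (X : Polynomial k) ^ (i + 2) ∈ Rcusp k := by
  intro i
  induction i using Nat.strong_induction_on with
  | _ i ih =>
    match i with
    | 0 => exact Algebra.subset_adjoin (Set.mem_insert _ _)
    | 1 => exact Algebra.subset_adjoin (Set.mem_insert_of_mem _ rfl)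
    | (n + 2) =>
      have h : (X : Polynomial k) ^ (n + 2 + 2) = X ^ 2 * X ^ (n + 2) := by ring
      rw [h]
      exact mul_mem (Algebra.subset_adjoin (Set.mem_insert _ _)) (ih n (by omega))

/-!
Λ ε_y is spanned by the paths starting at `y` (`ε_y`, `f^i h`, `g f^i h`): their span contains
`ε_y` and is stable under left multiplication by the generators. Multiplying by `ε_y` on the left
kills the `f^i h`, so `ε_y Λ ε_y` is spanned by `ε_y` and the `g f^i h`. Since `hg = f²`, these
multiply like the monomials `m^0` and `m^(i+2)`, which span `k[m², m³]`. Linear independence comes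
from the representation `ε_y, ε_z, f, g, h ↦ E₁₁, E₂₂, m E₂₂, m E₁₂, m E₂₁` on `k[m]²`, under
which `g f^i h` acts as `m^(i+2) E₁₁`.
-/

section Generalities

variable {R A B : Type*} [CommSemiring R] [Semiring A] [Semiring B] [Algebra R A] [Algebra R B]

theorem Submodule.mul_mem_span_of_adjoin_eq_top {s S : Set A} (hs : Algebra.adjoin R s = ⊤)
    (h : ∀ a ∈ s, ∀ t ∈ S, a * t ∈ span R S) (a : A) {t : A} (ht : t ∈ span R S) :
    a * t ∈ span R S := by
  have hgen (a : A) (ha : a ∈ s) : span R S ≤ (span R S).comap (LinearMap.mulLeft R a) :=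
    span_le.2 (h a ha)
  have ha : a ∈ Algebra.adjoin R s := hs ▸ Algebra.mem_top
  induction ha using Algebra.adjoin_induction generalizing t with
  | mem x hx => exact hgen x hx ht
  | algebraMap r => rw [← Algebra.smul_def]; exact smul_mem _ r ht
  | add x y _ _ hx hy => rw [add_mul]; exact add_mem (hx ht) (hy ht)
  | mul x y _ _ hx hy => rw [mul_assoc]; exact hx (hy ht)

theorem LinearMap.map_mul_of_mem_span (φ : A →ₗ[R] B) {s : Set A}
    (h : ∀ a ∈ s, ∀ b ∈ s, φ (a * b) = φ a * φ b) {x y : A}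
    (hx : x ∈ Submodule.span R s) (hy : y ∈ Submodule.span R s) :
    φ (x * y) = φ x * φ y := by
  induction hx, hy using Submodule.span_induction₂ with
  | mem_mem a b ha hb => exact h a ha b hb
  | zero_left => simp
  | zero_right => simp
  | add_left x y z _ _ _ h₁ h₂ => simp only [add_mul, map_add, h₁, h₂]
  | add_right x y z _ _ _ h₁ h₂ => simp only [mul_add, map_add, h₁, h₂]
  | smul_left r x y _ _ h₁ => simp only [smul_mul_assoc, map_smul, h₁]
  | smul_right r x y _ _ h₁ => simp only [mul_smul_comm, map_smul, h₁]

end Generalities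

section Relations

variable (k : Type*) [Field k]

theorem Ey_mul_Ey : Ey k * Ey k = Ey k :=
  (map_mul _ _ _).symm.trans (RingQuot.mkAlgHom_rel k QRel.ey_idem)

theorem Ey_mul_Ez : Ey k * Ez k = 0 :=
  (map_mul _ _ _).symm.trans ((RingQuot.mkAlgHom_rel k QRel.ey_ez).trans (map_zero _))

theorem Ez_mul_Ey : Ez k * Ey k = 0 :=
  (map_mul _ _ _).symm.trans ((RingQuot.mkAlgHom_rel k QRel.ez_ey).trans (map_zero _))

theorem Ez_mul_Fg : Ez k * Fg k = Fg k :=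
  (map_mul _ _ _).symm.trans (RingQuot.mkAlgHom_rel k QRel.f_left)

theorem Fg_mul_Ez : Fg k * Ez k = Fg k :=
  (map_mul _ _ _).symm.trans (RingQuot.mkAlgHom_rel k QRel.f_right)

theorem Ey_mul_Gg : Ey k * Gg k = Gg k :=
  (map_mul _ _ _).symm.trans (RingQuot.mkAlgHom_rel k QRel.g_left)

theorem Gg_mul_Ez : Gg k * Ez k = Gg k :=
  (map_mul _ _ _).symm.trans (RingQuot.mkAlgHom_rel k QRel.g_right)

theorem Ez_mul_Hg : Ez k * Hg k = Hg k :=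
  (map_mul _ _ _).symm.trans (RingQuot.mkAlgHom_rel k QRel.h_left)

theorem Hg_mul_Ey : Hg k * Ey k = Hg k :=
  (map_mul _ _ _).symm.trans (RingQuot.mkAlgHom_rel k QRel.h_right)

theorem Hg_mul_Gg : Hg k * Gg k = Fg k * Fg k :=
  (map_mul _ _ _).symm.trans ((RingQuot.mkAlgHom_rel k QRel.main).symm.trans (map_mul _ _ _))

theorem Fg_mul_Ey : Fg k * Ey k = 0 := by
  rw [← Fg_mul_Ez, mul_assoc, Ez_mul_Ey, mul_zero]

theorem Gg_mul_Ey : Gg k * Ey k = 0 := by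
  rw [← Gg_mul_Ez, mul_assoc, Ez_mul_Ey, mul_zero]

theorem Hg_mul_Ez : Hg k * Ez k = 0 := by
  rw [← Hg_mul_Ey, mul_assoc, Ey_mul_Ez, mul_zero]

theorem Ez_mul_Fg_pow_mul_Hg (i : ℕ) : Ez k * (Fg k ^ i * Hg k) = Fg k ^ i * Hg k := by
  cases i with
  | zero => rw [pow_zero, one_mul, Ez_mul_Hg]
  | succ i => rw [pow_succ', mul_assoc, ← mul_assoc, Ez_mul_Fg]

theorem Hg_mul_Gg_mul_Fg_pow (n : ℕ) : Hg k * (Gg k * Fg k ^ n) = Fg k ^ (n + 2) := by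
  rw [← mul_assoc, Hg_mul_Gg, ← sq, ← pow_add, add_comm]

end Relations

section CornerMonomial

variable (k : Type*) [Field k]

/-- The element of `ε_y Λ ε_y` corresponding to `m ^ n` in `k[m², m³]`; the index `1`, which has
no counterpart, is sent to `0`. -/
noncomputable def cornerMonomial : ℕ → Lam k
  | 0 => Ey k
  | 1 => 0
  | n + 2 => Gg k * Fg k ^ n * Hg k

theorem Ey_mul_cornerMonomial (n : ℕ) : Ey k * cornerMonomial k n = cornerMonomial k n := by
  match n with
  | 0 => exact Ey_mul_Ey k
  | 1 => exact mul_zero _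
  | n + 2 => simp only [cornerMonomial, ← mul_assoc, Ey_mul_Gg]

theorem cornerMonomial_mul_Ey (n : ℕ) : cornerMonomial k n * Ey k = cornerMonomial k n := by
  match n with
  | 0 => exact Ey_mul_Ey k
  | 1 => exact zero_mul _
  | n + 2 => simp only [cornerMonomial, mul_assoc, Hg_mul_Ey]

theorem Hg_mul_cornerMonomial (n : ℕ) :
    Hg k * cornerMonomial k (n + 2) = Fg k ^ (n + 2) * Hg k := by
  simp only [cornerMonomial, ← mul_assoc, ← Hg_mul_Gg_mul_Fg_pow]

theorem cornerMonomial_add {m n : ℕ} (hm : m ≠ 1) (hn : n ≠ 1) :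
    cornerMonomial k (m + n) = cornerMonomial k m * cornerMonomial k n := by
  match m, n with
  | 0, n => rw [zero_add, cornerMonomial, Ey_mul_cornerMonomial]
  | m + 2, 0 => rw [add_zero, cornerMonomial.eq_1, cornerMonomial_mul_Ey]
  | m + 2, n + 2 =>
    calc cornerMonomial k (m + 2 + (n + 2)) = Gg k * Fg k ^ m * (Fg k ^ (n + 2) * Hg k) := by
          rw [show m + 2 + (n + 2) = m + n + 2 + 2 by omega]
          simp only [cornerMonomial, pow_add, mul_assoc]
      _ = _ := by rw [← Hg_mul_cornerMonomial]; simp only [cornerMonomial, mul_assoc]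

end CornerMonomial

section CornerMap

variable (k : Type*) [Field k]

noncomputable def cornerMap : k[X] →ₗ[k] Lam k :=
  Polynomial.lsum fun n => LinearMap.toSpanSingleton k (Lam k) (cornerMonomial k n)

theorem cornerMap_monomial (n : ℕ) (c : k) :
    cornerMap k (monomial n c) = c • cornerMonomial k n := by
  simp [cornerMap]

theorem cornerMap_X_pow (n : ℕ) : cornerMap k (X ^ n) = cornerMonomial k n := by
  rw [← monomial_one_right_eq_X_pow, cornerMap_monomial, one_smul]

theorem Ey_mul_cornerMap_mul_Ey (p : k[X]) : Ey k * cornerMap k p * Ey k = cornerMap k p := by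
  induction p using Polynomial.induction_on' with
  | add p q hp hq => rw [map_add, mul_add, add_mul, hp, hq]
  | monomial n c =>
    rw [cornerMap_monomial, mul_smul_comm, smul_mul_assoc, Ey_mul_cornerMonomial,
      cornerMonomial_mul_Ey]

noncomputable def cuspSpan : Submodule k k[X] :=
  Submodule.span k ((X ^ ·) '' {1}ᶜ)

theorem cornerMap_mul {p q : k[X]} (hp : p ∈ cuspSpan k) (hq : q ∈ cuspSpan k) :
    cornerMap k (p * q) = cornerMap k p * cornerMap k q := by
  refine (cornerMap k).map_mul_of_mem_span ?_ hp hq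
  rintro _ ⟨m, hm, rfl⟩ _ ⟨n, hn, rfl⟩
  simp only [← pow_add, cornerMap_X_pow, cornerMonomial_add k hm hn]

theorem cuspSpan_mul_le : cuspSpan k * cuspSpan k ≤ cuspSpan k := by
  rw [cuspSpan, Submodule.span_mul_span]
  refine Submodule.span_mono ?_
  rintro _ ⟨_, ⟨m, hm, rfl⟩, _, ⟨n, hn, rfl⟩, rfl⟩
  exact ⟨m + n, by simp_all; omega, pow_add _ _ _⟩

theorem Rcusp_le_cuspSpan : Subalgebra.toSubmodule (Rcusp k) ≤ cuspSpan k := by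
  let S := (cuspSpan k).toSubalgebra (Submodule.subset_span ⟨0, by simp, pow_zero _⟩)
    fun _ _ hp hq => cuspSpan_mul_le k (Submodule.mul_mem_mul hp hq)
  refine Algebra.adjoin_le (S := S) ?_
  rintro _ (rfl | rfl)
  exacts [Submodule.subset_span ⟨2, by simp, rfl⟩, Submodule.subset_span ⟨3, by simp, rfl⟩]

end CornerMap

section PathRep

variable (k : Type*) [Field k]

noncomputable def genMatrix : QGen → Matrix (Fin 2) (Fin 2) k[X]
  | .ey => !![1, 0; 0, 0]
  | .ez => !![0, 0; 0, 1]
  | .f => !![0, 0; 0, X]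
  | .g => !![0, X; 0, 0]
  | .h => !![0, 0; X, 0]

noncomputable def pathRep : Lam k →ₐ[k] Matrix (Fin 2) (Fin 2) k[X] :=
  RingQuot.liftAlgHom k ⟨FreeAlgebra.lift k (genMatrix k), by
    rintro _ _ ⟨⟩ <;> ext i j <;> fin_cases i <;> fin_cases j <;> simp [genMatrix]⟩

theorem pathRep_gen (q : QGen) :
    pathRep k (RingQuot.mkAlgHom k (QRel k) (FreeAlgebra.ι k q)) = genMatrix k q :=
  (RingQuot.liftAlgHom_mkAlgHom_apply _ _ _ _).trans (FreeAlgebra.lift_ι_apply _ _)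

theorem pathRep_Gg_mul_Fg_pow (n : ℕ) :
    pathRep k (Gg k * Fg k ^ n) = !![0, X ^ (n + 1); 0, 0] := by
  induction n with
  | zero => rw [pow_zero, mul_one, Gg, pathRep_gen, zero_add, pow_one]; rfl
  | succ n ih =>
    rw [pow_succ, ← mul_assoc, map_mul, ih, Fg, pathRep_gen]
    ext i j; fin_cases i <;> fin_cases j <;> simp [genMatrix, pow_succ]

theorem pathRep_cornerMonomial {n : ℕ} (hn : n ≠ 1) :
    pathRep k (cornerMonomial k n) = !![X ^ n, 0; 0, 0] := by
  match n with
  | 0 => rw [cornerMonomial, Ey, pathRep_gen, pow_zero]; rfl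
  | n + 2 =>
    rw [cornerMonomial, map_mul, pathRep_Gg_mul_Fg_pow, Hg, pathRep_gen]
    ext i j; fin_cases i <;> fin_cases j <;> simp [genMatrix, pow_succ]

theorem pathRep_cornerMap_zero_zero {p : k[X]} (hp : p ∈ cuspSpan k) :
    pathRep k (cornerMap k p) 0 0 = p := by
  induction hp using Submodule.span_induction with
  | mem _ h =>
    obtain ⟨n, hn, rfl⟩ := h
    simp [cornerMap_X_pow, pathRep_cornerMonomial k hn]
  | zero => simp
  | add p q _ _ hp hq => simp [hp, hq]
  | smul c p _ hp => simp [hp]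

end PathRep

section PathsFromY

variable (k : Type*) [Field k]

theorem adjoin_generators_eq_top : Algebra.adjoin k {Ey k, Ez k, Fg k, Gg k, Hg k} = ⊤ := by
  refine Algebra.eq_top_iff.2 fun x => ?_
  obtain ⟨a, rfl⟩ := RingQuot.mkAlgHom_surjective k (QRel k) x
  induction a using FreeAlgebra.induction with
  | grade0 r => rw [AlgHom.commutes]; exact Subalgebra.algebraMap_mem _ r
  | grade1 q =>
    refine Algebra.subset_adjoin ?_
    cases q <;> [change Ey k ∈ _; change Ez k ∈ _; change Fg k ∈ _; change Gg k ∈ _;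
      change Hg k ∈ _] <;> simp
  | mul a b ha hb => rw [map_mul]; exact Subalgebra.mul_mem _ ha hb
  | add a b ha hb => rw [map_add]; exact Subalgebra.add_mem _ ha hb

def pathsFromY : Set (Lam k) :=
  Set.range (cornerMonomial k) ∪ Set.range fun i => Fg k ^ i * Hg k

theorem gen_mul_mem_span_pathsFromY :
    ∀ a ∈ ({Ey k, Ez k, Fg k, Gg k, Hg k} : Set (Lam k)), ∀ t ∈ pathsFromY k,
      a * t ∈ Submodule.span k (pathsFromY k) := by
  have hcorner (n : ℕ) : cornerMonomial k n ∈ Submodule.span k (pathsFromY k) :=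
    Submodule.subset_span (Or.inl ⟨n, rfl⟩)
  have harm (i : ℕ) : Fg k ^ i * Hg k ∈ Submodule.span k (pathsFromY k) :=
    Submodule.subset_span (Or.inr ⟨i, rfl⟩)
  have hzero : (0 : Lam k) ∈ Submodule.span k (pathsFromY k) := Submodule.zero_mem _
  have hy {a : Lam k} (ha : a * Ey k = 0) (n : ℕ) : a * cornerMonomial k n = 0 := by
    rw [← Ey_mul_cornerMonomial, ← mul_assoc, ha, zero_mul]
  have hz {a : Lam k} (ha : a * Ez k = 0) (i : ℕ) : a * (Fg k ^ i * Hg k) = 0 := by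
    rw [← Ez_mul_Fg_pow_mul_Hg, ← mul_assoc, ha, zero_mul]
  rintro a (rfl | rfl | rfl | rfl | rfl) _ (⟨n, rfl⟩ | ⟨i, rfl⟩)
  · rw [Ey_mul_cornerMonomial]; exact hcorner n
  · rw [hz (Ey_mul_Ez k)]; exact hzero
  · rw [hy (Ez_mul_Ey k)]; exact hzero
  · rw [Ez_mul_Fg_pow_mul_Hg]; exact harm i
  · rw [hy (Fg_mul_Ey k)]; exact hzero
  · rw [← mul_assoc, ← pow_succ']; exact harm (i + 1)
  · rw [hy (Gg_mul_Ey k)]; exact hzero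
  · rw [← mul_assoc]; exact hcorner (i + 2)
  · match n with
    | 0 => rw [cornerMonomial, Hg_mul_Ey, ← one_mul (Hg k), ← pow_zero (Fg k)]; exact harm 0
    | 1 => rw [cornerMonomial, mul_zero]; exact hzero
    | n + 2 => rw [Hg_mul_cornerMonomial]; exact harm (n + 2)
  · rw [hz (Hg_mul_Ez k)]; exact hzero

theorem mul_Ey_mem_span_pathsFromY (x : Lam k) : x * Ey k ∈ Submodule.span k (pathsFromY k) :=
  Submodule.mul_mem_span_of_adjoin_eq_top (adjoin_generators_eq_top k)
    (gen_mul_mem_span_pathsFromY k) x (Submodule.subset_span (Or.inl ⟨0, rfl⟩))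

theorem Ey_mul_mem_span_cornerMonomial {t : Lam k} (ht : t ∈ Submodule.span k (pathsFromY k)) :
    Ey k * t ∈ Submodule.span k (Set.range (cornerMonomial k)) := by
  refine Submodule.span_le (p := (Submodule.span k _).comap (LinearMap.mulLeft k (Ey k))) |>.2
    ?_ ht
  rintro _ (⟨n, rfl⟩ | ⟨i, rfl⟩) <;>
    simp only [SetLike.mem_coe, Submodule.mem_comap, LinearMap.mulLeft_apply]
  · rw [Ey_mul_cornerMonomial]
    exact Submodule.subset_span ⟨n, rfl⟩
  · rw [← Ez_mul_Fg_pow_mul_Hg, ← mul_assoc, Ey_mul_Ez, zero_mul]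
    exact Submodule.zero_mem _

end PathsFromY

section CuspMap

variable (k : Type*) [Field k]

noncomputable def cuspMap : Rcusp k →ₗ[k] Lam k :=
  cornerMap k ∘ₗ (Rcusp k).val.toLinearMap

theorem cuspMap_mul (a b : Rcusp k) : cuspMap k (a * b) = cuspMap k a * cuspMap k b :=
  cornerMap_mul k (Rcusp_le_cuspSpan k a.2) (Rcusp_le_cuspSpan k b.2)

theorem cuspMap_one : cuspMap k 1 = Ey k :=
  (congrArg (cornerMap k) (pow_zero X).symm).trans (cornerMap_X_pow k 0)

theorem cuspMap_injective : Function.Injective (cuspMap k) := fun a b hab => by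
  have h := congrArg (fun x => pathRep k x 0 0) hab
  simp only [cuspMap, LinearMap.coe_comp, Function.comp_apply, AlgHom.toLinearMap_apply,
    Subalgebra.coe_val] at h
  rwa [pathRep_cornerMap_zero_zero k (Rcusp_le_cuspSpan k a.2),
    pathRep_cornerMap_zero_zero k (Rcusp_le_cuspSpan k b.2), ← Subtype.ext_iff] at h

theorem span_cornerMonomial_le_range_cuspMap :
    Submodule.span k (Set.range (cornerMonomial k)) ≤ LinearMap.range (cuspMap k) := by
  refine Submodule.span_le.2 ?_
  rintro _ ⟨n, rfl⟩
  match n with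
  | 0 => exact ⟨1, cuspMap_one k⟩
  | 1 => exact Submodule.zero_mem _
  | n + 2 => exact ⟨⟨X ^ (n + 2), pow_mem_Rcusp k n⟩, cornerMap_X_pow k (n + 2)⟩

theorem range_cuspMap : Set.range (cuspMap k) = {x : Lam k | Ey k * x * Ey k = x} := by
  ext x
  constructor
  · rintro ⟨p, rfl⟩
    exact Ey_mul_cornerMap_mul_Ey k p
  · intro hx
    rw [Set.mem_ofPred_eq, mul_assoc] at hx
    rw [← hx]
    exact span_cornerMonomial_le_range_cuspMap k
      (Ey_mul_mem_span_cornerMonomial k (mul_Ey_mem_span_pathsFromY k x))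

end CuspMap

theorem stmt_17 (k : Type*) [Field k] :
    (∀ x y : Lam k, Ey k * x * Ey k = x → Ey k * y * Ey k = y → x * y = y * x) ∧
    ∃ φ : Rcusp k →ₗ[k] Lam k,
      Function.Injective φ ∧ (∀ a b, φ (a * b) = φ a * φ b) ∧ φ 1 = Ey k ∧
      Set.range φ = {x : Lam k | Ey k * x * Ey k = x} ∧
      ∀ i : ℕ, φ ⟨X ^ (i + 2), pow_mem_Rcusp k i⟩ = Gg k * Fg k ^ i * Hg k := by
  refine ⟨fun x y hx hy => ?_, cuspMap k, cuspMap_injective k, cuspMap_mul k, cuspMap_one k,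
    range_cuspMap k, fun i => cornerMap_X_pow k (i + 2)⟩
  obtain ⟨p, rfl⟩ : x ∈ Set.range (cuspMap k) := (range_cuspMap k).symm ▸ hx
  obtain ⟨q, rfl⟩ : y ∈ Set.range (cuspMap k) := (range_cuspMap k).symm ▸ hy
  rw [← cuspMap_mul, ← cuspMap_mul, mul_comm]
end

section
/- Suppose a commutative diagram of modules over a ring has three exact rows and three exact columns forming a 3×3 grid: rows 0 → B →α₁ C₁ →β₁ B → 0 (top and bottom) and 0 → C₂ →γ₁ D →δ₁ C₂ → 0 (middle), columns 0 → B →α₂ C₂ →β₂ B → 0 (left and right) and 0 → C₁ →γ₂ D →δ₂ C₁ → 0 (middle). Then the sequence D →(γ₂∘α₁∘β₂∘δ₁) D →(γ₁∘δ₁, γ₂∘δ₂) D ⊕ D is exact in the middle. -/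
/-!
By the square `γ₂ ∘ α₁ = γ₁ ∘ α₂` the map `γ₂α₁β₂δ₁` is `γ₁α₂` precomposed with the surjection
`β₂δ₁`, and the pair map is `(δ₁, δ₂)` followed by the injection `γ₁ × γ₂`. So it suffices that
`ker δ₁ ∩ ker δ₂ = im (γ₁α₂)`: an element of `ker δ₁` is `γ₁ c`, and `δ₂ (γ₁ c) = α₁ (β₂ c)`
vanishes iff `β₂ c = 0`, i.e. iff `c ∈ im α₂`.
-/

open Function

theorem Function.Exact.comp_prod_of_comm {R B C₁ C₂ D : Type*} [Ring R]
    [AddCommGroup B] [Module R B] [AddCommGroup C₁] [Module R C₁]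
    [AddCommGroup C₂] [Module R C₂] [AddCommGroup D] [Module R D]
    {α : B →ₗ[R] C₁} {α' : B →ₗ[R] C₂} {β : C₂ →ₗ[R] B}
    {γ : C₂ →ₗ[R] D} {δ' : D →ₗ[R] C₂} {δ : D →ₗ[R] C₁}
    (hγδ' : Exact γ δ') (hα'β : Exact α' β) (hα : Injective α) (hsq : δ ∘ₗ γ = α ∘ₗ β) :
    Exact (γ ∘ₗ α') (δ'.prod δ) := by
  have hδγ (c : C₂) : δ (γ c) = α (β c) := LinearMap.congr_fun hsq c
  refine Exact.of_comp_of_mem_range ?_ fun d hd => ?_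
  · funext b
    simp [hγδ'.apply_apply_eq_zero, hδγ, hα'β.apply_apply_eq_zero]
  · obtain ⟨hδ'd, hδd⟩ := Prod.ext_iff.mp hd
    obtain ⟨c, rfl⟩ := (hγδ' d).mp hδ'd
    have hβc : β c = 0 := hα <| by simpa [hδγ] using hδd
    obtain ⟨b, rfl⟩ := (hα'β c).mp hβc
    exact ⟨b, rfl⟩

theorem stmt_18_general (R : Type*) [Ring R] (B C₁ C₂ D : Type*)
    [AddCommGroup B] [Module R B] [AddCommGroup C₁] [Module R C₁]
    [AddCommGroup C₂] [Module R C₂] [AddCommGroup D] [Module R D]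
    (α₁ : B →ₗ[R] C₁) (α₂ : B →ₗ[R] C₂) (β₂ : C₂ →ₗ[R] B)
    (γ₁ : C₂ →ₗ[R] D) (δ₁ : D →ₗ[R] C₂) (γ₂ : C₁ →ₗ[R] D) (δ₂ : D →ₗ[R] C₁)
    -- top and bottom rows `0 → B → C₁ → B → 0`
    (hα₁ : Function.Injective α₁)
    -- middle row `0 → C₂ → D → C₂ → 0`
    (hγ₁ : Function.Injective γ₁) (hδ₁ : Function.Surjective δ₁)
    (hmrow : Function.Exact ⇑γ₁ ⇑δ₁)
    -- left and right columns `0 → B → C₂ → B → 0`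
    (hβ₂ : Function.Surjective β₂)
    (hcol : Function.Exact ⇑α₂ ⇑β₂)
    -- middle column `0 → C₁ → D → C₁ → 0`
    (hγ₂ : Function.Injective γ₂)
    -- the four commuting squares of the 3×3 diagram
    (sq1 : γ₂ ∘ₗ α₁ = γ₁ ∘ₗ α₂)
    (sq3 : δ₂ ∘ₗ γ₁ = α₁ ∘ₗ β₂) :
    Function.Exact (fun d : D => γ₂ (α₁ (β₂ (δ₁ d))))
      (fun d : D => ((γ₁ (δ₁ d), γ₂ (δ₂ d)) : D × D)) := by
  have hker : Exact (γ₁ ∘ₗ α₂) (δ₁.prod δ₂) := hmrow.comp_prod_of_comm hcol hα₁ sq3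
  have hexact : Exact ((γ₁ ∘ₗ α₂) ∘ₗ (β₂ ∘ₗ δ₁)) (γ₁.prodMap γ₂ ∘ₗ δ₁.prod δ₂) :=
    ((hγ₁.prodMap hγ₂).comp_exact_iff_exact).mpr <|
      ((hβ₂.comp hδ₁).comp_exact_iff_exact).mpr hker
  convert hexact using 1
  · ext d
    exact LinearMap.congr_fun sq1 (β₂ (δ₁ d))
  · rfl

theorem stmt_18 (R : Type*) [Ring R] (B C₁ C₂ D : Type*)
    [AddCommGroup B] [Module R B] [AddCommGroup C₁] [Module R C₁]
    [AddCommGroup C₂] [Module R C₂] [AddCommGroup D] [Module R D]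
    (α₁ : B →ₗ[R] C₁) (β₁ : C₁ →ₗ[R] B) (α₂ : B →ₗ[R] C₂) (β₂ : C₂ →ₗ[R] B)
    (γ₁ : C₂ →ₗ[R] D) (δ₁ : D →ₗ[R] C₂) (γ₂ : C₁ →ₗ[R] D) (δ₂ : D →ₗ[R] C₁)
    -- top and bottom rows `0 → B → C₁ → B → 0`
    (hα₁ : Function.Injective α₁) (hβ₁ : Function.Surjective β₁)
    (hrow : Function.Exact ⇑α₁ ⇑β₁)
    -- middle row `0 → C₂ → D → C₂ → 0`
    (hγ₁ : Function.Injective γ₁) (hδ₁ : Function.Surjective δ₁)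
    (hmrow : Function.Exact ⇑γ₁ ⇑δ₁)
    -- left and right columns `0 → B → C₂ → B → 0`
    (hα₂ : Function.Injective α₂) (hβ₂ : Function.Surjective β₂)
    (hcol : Function.Exact ⇑α₂ ⇑β₂)
    -- middle column `0 → C₁ → D → C₁ → 0`
    (hγ₂ : Function.Injective γ₂) (hδ₂ : Function.Surjective δ₂)
    (hmcol : Function.Exact ⇑γ₂ ⇑δ₂)
    -- the four commuting squares of the 3×3 diagram
    (sq1 : γ₂ ∘ₗ α₁ = γ₁ ∘ₗ α₂)
    (sq2 : δ₁ ∘ₗ γ₂ = α₂ ∘ₗ β₁)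
    (sq3 : δ₂ ∘ₗ γ₁ = α₁ ∘ₗ β₂)
    (sq4 : β₁ ∘ₗ δ₂ = β₂ ∘ₗ δ₁) :
    Function.Exact (fun d : D => γ₂ (α₁ (β₂ (δ₁ d))))
      (fun d : D => ((γ₁ (δ₁ d), γ₂ (δ₂ d)) : D × D)) :=
  stmt_18_general R B C₁ C₂ D α₁ α₂ β₂ γ₁ δ₁ γ₂ δ₂ hα₁ hγ₁ hδ₁ hmrow hβ₂ hcol hγ₂ sq1 sq3
end

section
/- Let A = k[α,β]/(α²,β²) and let Z, Y be the 4-dimensional A-modules given by the explicit matrices: Z(α) = Y(α) = E₃₁ + E₄₂, Y(β) = E₂₁ + E₄₃, Z(β) = E₄₁ (where E_{ij} denotes the 4×4 matrix unit). With f̃ = E₂₁+E₃₂+E₄₃, g̃ = E₂₂+E₃₁+E₄₄, h̃ = E₁₁+E₃₃+E₄₂, the sequence 0 → Z →(f̃,g̃)ᵀ Z ⊕ Y →(f̃,−h̃) Z → 0 is an exact sequence of A-modules, and dim_k End_A(Z) − dim_k End_A(Y) = 2. -/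
open Matrix Module

/-- `Z(α) = Y(α) = E₃₁ + E₄₂`. -/
noncomputable def Za (k : Type*) [Field k] : Matrix (Fin 4) (Fin 4) k :=
  !![0,0,0,0; 0,0,0,0; 1,0,0,0; 0,1,0,0]

/-- `Z(β) = E₄₁`. -/
noncomputable def Zb (k : Type*) [Field k] : Matrix (Fin 4) (Fin 4) k :=
  !![0,0,0,0; 0,0,0,0; 0,0,0,0; 1,0,0,0]

/-- `Y(β) = E₂₁ + E₄₃`. -/
noncomputable def Yb (k : Type*) [Field k] : Matrix (Fin 4) (Fin 4) k :=
  !![0,0,0,0; 1,0,0,0; 0,0,0,0; 0,0,1,0]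

/-- `f̃ = E₂₁ + E₃₂ + E₄₃`. -/
noncomputable def ft (k : Type*) [Field k] : Matrix (Fin 4) (Fin 4) k :=
  !![0,0,0,0; 1,0,0,0; 0,1,0,0; 0,0,1,0]

/-- `g̃ = E₂₂ + E₃₁ + E₄₄`. -/
noncomputable def gt' (k : Type*) [Field k] : Matrix (Fin 4) (Fin 4) k :=
  !![0,0,0,0; 0,1,0,0; 1,0,0,0; 0,0,0,1]

/-- `h̃ = E₁₁ + E₃₃ + E₄₂`. -/
noncomputable def ht (k : Type*) [Field k] : Matrix (Fin 4) (Fin 4) k :=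
  !![1,0,0,0; 0,0,0,0; 0,0,1,0; 0,1,0,0]

/-- The space of `A`-module endomorphisms of the `k[α,β]/(α²,β²)`-module given by the
commuting square-zero matrices `P` (action of `α`) and `Q` (action of `β`): the matrices
commuting with both `P` and `Q`. -/
noncomputable def endSp (k : Type*) [Field k] (P Q : Matrix (Fin 4) (Fin 4) k) :
    Submodule k (Matrix (Fin 4) (Fin 4) k) :=
  LinearMap.ker (LinearMap.mulLeft k P - LinearMap.mulRight k P) ⊓
    LinearMap.ker (LinearMap.mulLeft k Q - LinearMap.mulRight k Q)

/-!
Everything reduces to computations with explicit `4 × 4` matrices. The kernel of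
`(p, q) ↦ f̃ p - h̃ q` is cut out by `q₀ = p₀ = 0`, `p₁ = q₂`, `p₂ = q₁`, and each such pair is the
image of `(p₁, p₂, p₃, q₃)` under `(f̃, g̃)`. A matrix commuting with the actions of `α` and `β`
is lower triangular with constant diagonal, and the commutation relations leave six free entries
for `Z` but only four for `Y`.
-/

-- `simp` does not close `![0, 0, 0, 0] = 0` by itself, since `Matrix.zero_empty` rewrites the
-- tail `0 : Fin 0 → α` away before `Matrix.cons_zero_zero` can fire.
@[simp] lemma Matrix.cons_zero_four {α : Type*} [Zero α] : ![(0 : α), 0, 0, 0] = 0 := by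
  ext i; fin_cases i <;> rfl

theorem Matrix.eta_fin_four {α : Type*} (A : Matrix (Fin 4) (Fin 4) α) :
    A = !![A 0 0, A 0 1, A 0 2, A 0 3; A 1 0, A 1 1, A 1 2, A 1 3;
      A 2 0, A 2 1, A 2 2, A 2 3; A 3 0, A 3 1, A 3 2, A 3 3] := by
  ext i j; fin_cases i <;> fin_cases j <;> rfl

section

variable {k : Type*} [Field k]

lemma A_module_relations : Za k * Za k = 0 ∧ Zb k * Zb k = 0 ∧ Za k * Zb k = Zb k * Za k ∧
    Yb k * Yb k = 0 ∧ Za k * Yb k = Yb k * Za k := by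
  simp [Za, Zb, Yb]

lemma A_hom_relations : ft k * Za k = Za k * ft k ∧ ft k * Zb k = Zb k * ft k ∧
    gt' k * Za k = Za k * gt' k ∧ gt' k * Zb k = Yb k * gt' k ∧
    ht k * Za k = Za k * ht k ∧ ht k * Yb k = Zb k * ht k := by
  simp [Za, Zb, Yb, ft, gt', ht]

lemma ft_mulVec (v : Fin 4 → k) : ft k *ᵥ v = ![0, v 0, v 1, v 2] := by
  simp [ft, vecHead, vecTail]

lemma gt'_mulVec (v : Fin 4 → k) : gt' k *ᵥ v = ![0, v 1, v 0, v 3] := by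
  simp [gt', vecHead, vecTail]

lemma ht_mulVec (v : Fin 4 → k) : ht k *ᵥ v = ![v 0, 0, v 2, v 1] := by
  simp [ht, vecHead, vecTail]

lemma injective_ft_gt' : Function.Injective fun v : Fin 4 → k => (ft k *ᵥ v, gt' k *ᵥ v) := by
  intro v w h
  simp only [ft_mulVec, gt'_mulVec, Prod.mk.injEq, vecCons_inj] at h
  ext i; fin_cases i <;> simp [h]

lemma exact_ft_gt'_ht : Function.Exact (fun v : Fin 4 → k => (ft k *ᵥ v, gt' k *ᵥ v))
    (fun p : (Fin 4 → k) × (Fin 4 → k) => ft k *ᵥ p.1 - ht k *ᵥ p.2) := by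
  rintro ⟨p, q⟩
  simp only [ft_mulVec, ht_mulVec, gt'_mulVec, Set.mem_range, Prod.mk.injEq]
  constructor
  · intro h
    simp [sub_eq_zero] at h
    refine ⟨![p 1, p 2, p 3, q 3], ?_, ?_⟩ <;> ext i <;> fin_cases i <;> simp [h]
  · rintro ⟨v, rfl, rfl⟩
    simp

lemma surjective_ft_sub_ht :
    Function.Surjective fun p : (Fin 4 → k) × (Fin 4 → k) => ft k *ᵥ p.1 - ht k *ᵥ p.2 := by
  intro w
  refine ⟨(![w 1, w 2, w 3, 0], ![-w 0, 0, 0, 0]), ?_⟩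
  ext i; fin_cases i <;> simp [ft_mulVec, ht_mulVec]

lemma mem_endSp_iff {P Q M : Matrix (Fin 4) (Fin 4) k} :
    M ∈ endSp k P Q ↔ P * M = M * P ∧ Q * M = M * Q := by
  simp [endSp, sub_eq_zero]

variable (k) in
noncomputable def endZParam : (Fin 6 → k) →ₗ[k] Matrix (Fin 4) (Fin 4) k where
  toFun c := !![c 0, 0, 0, 0; c 1, c 0, 0, 0; c 2, c 3, c 0, 0; c 4, c 5, c 1, c 0]
  map_add' x y := by simp [Matrix.of_add_of]
  map_smul' r x := by simp [Matrix.smul_of]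

variable (k) in
noncomputable def endYParam : (Fin 4 → k) →ₗ[k] Matrix (Fin 4) (Fin 4) k where
  toFun c := !![c 0, 0, 0, 0; c 1, c 0, 0, 0; c 2, 0, c 0, 0; c 3, c 2, c 1, c 0]
  map_add' x y := by simp [Matrix.of_add_of]
  map_smul' r x := by simp [Matrix.smul_of]

lemma endZParam_injective : Function.Injective (endZParam k) :=
  Function.LeftInverse.injective (g := fun M => ![M 0 0, M 1 0, M 2 0, M 2 1, M 3 0, M 3 1])
    fun c => by ext i; fin_cases i <;> rfl

lemma endYParam_injective : Function.Injective (endYParam k) :=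
  Function.LeftInverse.injective (g := fun M => ![M 0 0, M 1 0, M 2 0, M 3 0])
    fun c => by ext i; fin_cases i <;> rfl

lemma range_endZParam : LinearMap.range (endZParam k) = endSp k (Za k) (Zb k) := by
  ext M
  constructor
  · rintro ⟨c, rfl⟩
    simp [mem_endSp_iff, Za, Zb, endZParam]
  · intro hM
    rw [mem_endSp_iff, M.eta_fin_four] at hM
    simp [Za, Zb] at hM
    refine ⟨![M 0 0, M 1 0, M 2 0, M 2 1, M 3 0, M 3 1], ?_⟩
    rw [M.eta_fin_four]
    simp [endZParam]
    grind

lemma range_endYParam : LinearMap.range (endYParam k) = endSp k (Za k) (Yb k) := by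
  ext M
  constructor
  · rintro ⟨c, rfl⟩
    simp [mem_endSp_iff, Za, Yb, endYParam]
  · intro hM
    rw [mem_endSp_iff, M.eta_fin_four] at hM
    simp [Za, Yb] at hM
    refine ⟨![M 0 0, M 1 0, M 2 0, M 3 0], ?_⟩
    rw [M.eta_fin_four]
    simp [endYParam]
    grind

lemma finrank_endSp_Z : finrank k (endSp k (Za k) (Zb k)) = 6 := by
  rw [← range_endZParam, LinearMap.finrank_range_of_inj endZParam_injective, finrank_fin_fun]

lemma finrank_endSp_Y : finrank k (endSp k (Za k) (Yb k)) = 4 := by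
  rw [← range_endYParam, LinearMap.finrank_range_of_inj endYParam_injective, finrank_fin_fun]

end

theorem stmt_19_general (k : Type*) [Field k] :
    -- `Z` and `Y` are modules over `A = k[α,β]/(α²,β²)`
    (Za k * Za k = 0 ∧ Zb k * Zb k = 0 ∧ Za k * Zb k = Zb k * Za k ∧
      Yb k * Yb k = 0 ∧ Za k * Yb k = Yb k * Za k) ∧
    -- `f̃ : Z → Z`, `g̃ : Z → Y`, `h̃ : Y → Z` are `A`-module homomorphisms
    (ft k * Za k = Za k * ft k ∧ ft k * Zb k = Zb k * ft k ∧
      gt' k * Za k = Za k * gt' k ∧ gt' k * Zb k = Yb k * gt' k ∧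
      ht k * Za k = Za k * ht k ∧ ht k * Yb k = Zb k * ht k) ∧
    -- `0 → Z → Z ⊕ Y → Z → 0` is exact
    (Function.Injective fun v : Fin 4 → k => ((ft k).mulVec v, (gt' k).mulVec v)) ∧
    Function.Exact (fun v : Fin 4 → k => ((ft k).mulVec v, (gt' k).mulVec v))
      (fun p : (Fin 4 → k) × (Fin 4 → k) => (ft k).mulVec p.1 - (ht k).mulVec p.2) ∧
    (Function.Surjective fun p : (Fin 4 → k) × (Fin 4 → k) =>
      (ft k).mulVec p.1 - (ht k).mulVec p.2) ∧
    -- `dim End_A(Z) − dim End_A(Y) = 2`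
    finrank k (endSp k (Za k) (Zb k)) = finrank k (endSp k (Za k) (Yb k)) + 2 :=
  ⟨A_module_relations, A_hom_relations, injective_ft_gt', exact_ft_gt'_ht, surjective_ft_sub_ht,
    by rw [finrank_endSp_Z, finrank_endSp_Y]⟩

theorem stmt_19 (k : Type*) [Field k] [IsAlgClosed k] :
    -- `Z` and `Y` are modules over `A = k[α,β]/(α²,β²)`
    (Za k * Za k = 0 ∧ Zb k * Zb k = 0 ∧ Za k * Zb k = Zb k * Za k ∧
      Yb k * Yb k = 0 ∧ Za k * Yb k = Yb k * Za k) ∧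
    -- `f̃ : Z → Z`, `g̃ : Z → Y`, `h̃ : Y → Z` are `A`-module homomorphisms
    (ft k * Za k = Za k * ft k ∧ ft k * Zb k = Zb k * ft k ∧
      gt' k * Za k = Za k * gt' k ∧ gt' k * Zb k = Yb k * gt' k ∧
      ht k * Za k = Za k * ht k ∧ ht k * Yb k = Zb k * ht k) ∧
    -- `0 → Z → Z ⊕ Y → Z → 0` is exact
    (Function.Injective fun v : Fin 4 → k => ((ft k).mulVec v, (gt' k).mulVec v)) ∧
    Function.Exact (fun v : Fin 4 → k => ((ft k).mulVec v, (gt' k).mulVec v))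
      (fun p : (Fin 4 → k) × (Fin 4 → k) => (ft k).mulVec p.1 - (ht k).mulVec p.2) ∧
    (Function.Surjective fun p : (Fin 4 → k) × (Fin 4 → k) =>
      (ft k).mulVec p.1 - (ht k).mulVec p.2) ∧
    -- `dim End_A(Z) − dim End_A(Y) = 2`
    finrank k (endSp k (Za k) (Zb k)) = finrank k (endSp k (Za k) (Yb k)) + 2 :=
  stmt_19_general k
end
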